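/- arXiv:2603.16187 — 7 statements merged into one kernel-verified Lean document; each statement's English description precedes it below -/
import Mathlib

section
/- Let δ be an integer with 1 ≤ δ ≤ q−1 and let β = (γ^δ·α_1, …, γ^δ·α_k) ∈ F_q^k (so n = k). If 2ℓ < k, then the GRL code GRL_k(β, A) is Euclidean LCD, i.e. GRL_k(β, A) ∩ GRL_k(β, A)^⊥ = {0}. -/
open Matrix BigOperators Finset

/-- Euclidean dual of a code `C ⊆ F^ι`. -/
def dualE {F : Type} [Field F] {ι : Type} [Fintype ι] (C : Submodule F (ι → F)) :
    Submodule F (ι → F) where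
  carrier := {x | ∀ y ∈ C, ∑ i, x i * y i = 0}
  add_mem' := by
    intro a b ha hb y hy
    have h : ∑ i, (a + b) i * y i = (∑ i, a i * y i) + ∑ i, b i * y i := by
      rw [← Finset.sum_add_distrib]
      exact Finset.sum_congr rfl fun i _ => add_mul _ _ _
    rw [h, ha y hy, hb y hy, add_zero]
  zero_mem' := by intro y hy; simp
  smul_mem' := by
    intro c a ha y hy
    have h : ∑ i, (c • a) i * y i = c * ∑ i, a i * y i := by
      rw [Finset.mul_sum]
      exact Finset.sum_congr rfl fun i _ => by
        simp [Pi.smul_apply, smul_eq_mul, mul_assoc]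
    rw [h, ha y hy, mul_zero]

/-- Generator matrix of the generalized Roth–Lempel code: evaluation columns indexed by `ι`
(entry `β j ^ r`), extra columns indexed by `Fin ℓ` (zero for rows `r < k - ℓ`, and the
corresponding row of `A` for rows `k - ℓ ≤ r ≤ k - 1`). -/
def GRLmatrix {F : Type} [Field F] (k ℓ : ℕ) (hℓk : ℓ ≤ k) {ι : Type} (β : ι → F)
    (A : Matrix (Fin ℓ) (Fin ℓ) F) : Matrix (Fin k) (ι ⊕ Fin ℓ) F :=
  fun r => Sum.elim (fun j => β j ^ (r : ℕ))
    (fun j' => if _h : (r : ℕ) < k - ℓ then 0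
      else A ⟨(r : ℕ) - (k - ℓ), by have := r.isLt; omega⟩ j')

/-- The generalized Roth–Lempel code: the row span of `GRLmatrix`. -/
def GRLcode {F : Type} [Field F] (k ℓ : ℕ) (hℓk : ℓ ≤ k) {ι : Type} (β : ι → F)
    (A : Matrix (Fin ℓ) (Fin ℓ) F) : Submodule F ((ι ⊕ Fin ℓ) → F) :=
  Submodule.span F (Set.range (GRLmatrix k ℓ hℓk β A))

lemma aux_sum_roots {F : Type} [Field F] [DecidableEq F] (k : ℕ) (x : F) (hx : x ^ k = 1) :
    ∑ j : Fin k, x ^ ((j : ℕ) + 1) = if x = 1 then (k : F) else 0 := by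
  rw [Fin.sum_univ_eq_sum_range (fun j => x ^ (j + 1)) k]
  split_ifs with h
  · simp [h]
  · have h2 : ∑ j ∈ Finset.range k, x ^ (j + 1) = x * ∑ j ∈ Finset.range k, x ^ j := by
      rw [Finset.mul_sum]
      exact Finset.sum_congr rfl fun j _ => by ring
    rw [h2, geom_sum_eq h, hx]
    simp

/-- if `2ℓ < k`, the GRL code `GRL_k(β, A)` with
`β = (γ^δ·α_1, …, γ^δ·α_k)` is Euclidean LCD. -/
theorem stmt0 {F : Type} [Field F] [Fintype F]
    (p m : ℕ) (hp : p.Prime) (hodd : Odd p) (hm : 0 < m)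
    (hcard : Fintype.card F = p ^ m)
    (γ : Fˣ) (hγ : ∀ x : Fˣ, x ∈ Subgroup.zpowers γ)
    (k ℓ : ℕ) (hℓ2 : 2 ≤ ℓ) (hℓk : ℓ ≤ k) (hkdvd : k ∣ Fintype.card F - 1)
    (A : Matrix (Fin ℓ) (Fin ℓ) F) (hA : IsUnit A.det)
    (α : Fin k → F)
    (hα : ∀ i : Fin k, α i = (γ : F) ^ ((Fintype.card F - 1) / k * ((i : ℕ) + 1)))
    (δ : ℕ) (hδ1 : 1 ≤ δ) (hδq : δ ≤ Fintype.card F - 1)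
    (β : Fin k → F) (hβ : ∀ i, β i = (γ : F) ^ δ * α i)
    (hlt : 2 * ℓ < k) :
    GRLcode k ℓ hℓk β A ⊓ dualE (GRLcode k ℓ hℓk β A) = ⊥ := by
  classical
  set q := Fintype.card F with hq
  have hq1 : 1 < q := Fintype.one_lt_card
  have hk1 : 0 < k := by omega
  have hkq : k ≤ q - 1 := Nat.le_of_dvd (by omega) hkdvd
  set e := (q - 1) / k with he
  have hek : e * k = q - 1 := Nat.div_mul_cancel hkdvd
  have he0 : 0 < e := Nat.div_pos hkq hk1
  -- order of γ
  have horder : orderOf γ = q - 1 := by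
    have h := orderOf_eq_card_of_forall_mem_zpowers hγ
    rw [Nat.card_eq_fintype_card, Fintype.card_units] at h
    exact h
  have hordu : orderOf (γ ^ e) = k := by
    rw [orderOf_pow, horder]
    have hd : e ∣ q - 1 := ⟨k, hek.symm⟩
    rw [Nat.gcd_eq_right hd, ← hek, Nat.mul_div_cancel_left k he0]
  have hu1 : ∀ t : ℕ, (((γ : F) ^ e) ^ t = 1 ↔ k ∣ t) := by
    intro t
    have h1 : ((γ : F) ^ e) ^ t = ((((γ ^ e) ^ t : Fˣ)) : F) := by
      rw [Units.val_pow_eq_pow_val, Units.val_pow_eq_pow_val]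
    rw [h1, Units.val_eq_one, ← hordu, orderOf_dvd_iff_pow_eq_one]
  have hωk : ((γ : F) ^ e) ^ k = 1 := (hu1 k).mpr dvd_rfl
  -- character sum
  have hS : ∀ t : ℕ, ∑ j : Fin k, β j ^ t
      = (γ : F) ^ (δ * t) * (if k ∣ t then (k : F) else 0) := by
    intro t
    have hterm : ∀ j : Fin k,
        β j ^ t = (γ : F) ^ (δ * t) * (((γ : F) ^ e) ^ t) ^ ((j : ℕ) + 1) := by
      intro j
      have h1 : β j = (γ : F) ^ (δ + e * ((j : ℕ) + 1)) := by
        rw [hβ j, hα j, ← pow_add]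
      rw [h1, ← pow_mul, ← pow_mul, ← pow_mul, ← pow_add]
      congr 1
      ring
    simp_rw [hterm]
    rw [← Finset.mul_sum]
    have hxk : (((γ : F) ^ e) ^ t) ^ k = 1 := by
      rw [← pow_mul, mul_comm t k, pow_mul, hωk, one_pow]
    rw [aux_sum_roots k _ hxk]
    by_cases hkt : k ∣ t
    · rw [if_pos ((hu1 t).mpr hkt), if_pos hkt]
    · rw [if_neg (fun h => hkt ((hu1 t).mp h)), if_neg hkt]
  -- (k : F) ≠ 0
  have hk0 : (k : F) ≠ 0 := by
    intro h
    have hrc : CharP F (ringChar F) := ringChar.charP F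
    have hrdvd : ringChar F ∣ k := (CharP.cast_eq_zero_iff F (ringChar F) k).mp h
    obtain ⟨n, hrp, hcard'⟩ := FiniteField.card F (ringChar F)
    have hrP : ringChar F ∣ q := by
      rw [hq, hcard']
      exact dvd_pow_self _ (by exact_mod_cast n.pos.ne')
    have : ringChar F = p := by
      have h2 : ringChar F ∣ p ^ m := by rw [← hcard]; exact hrP
      have := hrp.dvd_of_dvd_pow h2
      exact ((Nat.prime_dvd_prime_iff_eq hrp hp).mp this)
    have hpk : p ∣ k := this ▸ hrdvd
    have hpq1 : p ∣ q - 1 := hpk.trans hkdvd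
    have hpq : p ∣ q := by rw [hcard]; exact dvd_pow_self _ (by omega)
    have : p ∣ 1 := by
      have := Nat.dvd_sub hpq hpq1
      rwa [Nat.sub_sub_self (by omega)] at this
    have h1 := Nat.le_of_dvd Nat.one_pos this
    have := hp.two_le
    omega
  have hγ0 : (γ : F) ≠ 0 := Units.ne_zero γ
  have hW : ∀ t : ℕ, (γ : F) ^ t * (k : F) ≠ 0 :=
    fun t => mul_ne_zero (pow_ne_zero _ hγ0) hk0
  -- divisibility on the relevant range
  have hdvd : ∀ s : ℕ, s < 2 * k → (k ∣ s ↔ s = 0 ∨ s = k) := by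
    intro s hs
    constructor
    · rintro ⟨t, rfl⟩
      rcases Nat.lt_or_ge t 2 with h | h
      · interval_cases t <;> omega
      · exfalso
        have := Nat.mul_le_mul_left k h
        omega
    · rintro (rfl | rfl) <;> simp
  -- the generator matrix
  set M : Matrix (Fin k) (Fin k ⊕ Fin ℓ) F := GRLmatrix k ℓ hℓk β A with hM
  -- Gram entries when one index is below k - ℓ
  have hN0 : ∀ i r : Fin k, ((i : ℕ) < k - ℓ ∨ (r : ℕ) < k - ℓ) →
      ∑ j, M i j * M r j
        = (γ : F) ^ (δ * ((i : ℕ) + (r : ℕ)))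
            * (if k ∣ (i : ℕ) + (r : ℕ) then (k : F) else 0) := by
    intro i r h
    rw [Fintype.sum_sum_type]
    have h2 : ∑ j' : Fin ℓ, M i (Sum.inr j') * M r (Sum.inr j') = 0 := by
      apply Finset.sum_eq_zero
      intro j' _
      rcases h with h | h
      · have hz : M i (Sum.inr j') = 0 := by simp [hM, GRLmatrix, h]
        rw [hz, zero_mul]
      · have hz : M r (Sum.inr j') = 0 := by simp [hM, GRLmatrix, h]
        rw [hz, mul_zero]
    have h1 : ∑ j : Fin k, M i (Sum.inl j) * M r (Sum.inl j)
        = ∑ j : Fin k, β j ^ ((i : ℕ) + (r : ℕ)) := by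
      apply Finset.sum_congr rfl
      intro j _
      simp [hM, GRLmatrix, pow_add]
    rw [h1, h2, add_zero, hS]
  -- now take x in the intersection
  rw [eq_bot_iff]
  intro x hx
  rw [Submodule.mem_inf] at hx
  obtain ⟨hx1, hx2⟩ := hx
  rw [Submodule.mem_bot]
  rw [GRLcode] at hx1
  obtain ⟨c, hc⟩ := (Submodule.mem_span_range_iff_exists_fun F).mp hx1
  have hdual : ∀ y ∈ GRLcode k ℓ hℓk β A, ∑ i, x i * y i = 0 := hx2
  have hxj : ∀ j, x j = ∑ i, c i * M i j := by
    intro j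
    rw [← hc]
    simp [hM]
  have hEq : ∀ r : Fin k, ∑ i, c i * (∑ j, M i j * M r j) = 0 := by
    intro r
    have hmem : M r ∈ GRLcode k ℓ hℓk β A := by
      rw [GRLcode]
      exact Submodule.subset_span ⟨r, rfl⟩
    have h1 := hdual (M r) hmem
    calc ∑ i, c i * (∑ j, M i j * M r j)
        = ∑ i, ∑ j, c i * M i j * M r j := by
          simp_rw [Finset.mul_sum, mul_assoc]
      _ = ∑ j, ∑ i, c i * M i j * M r j := Finset.sum_comm
      _ = ∑ j, x j * M r j := by
          apply Finset.sum_congr rfl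
          intro j _
          rw [hxj j, Finset.sum_mul]
      _ = 0 := h1
  have hcol : ∀ (r i₀ : Fin k),
      (∀ i : Fin k, i ≠ i₀ → c i * (∑ j, M i j * M r j) = 0) →
      c i₀ * (∑ j, M i₀ j * M r j) = 0 := by
    intro r i₀ hz
    rw [← Finset.sum_eq_single i₀ (fun i _ h => hz i h)
      (fun h => absurd (Finset.mem_univ i₀) h)]
    exact hEq r
  have hkℓ : ℓ < k - ℓ := by omega
  -- step 1 : c 0 = 0
  have h0 : c ⟨0, hk1⟩ = 0 := by
    have key := hcol ⟨0, hk1⟩ ⟨0, hk1⟩ ?_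
    · rw [hN0 _ _ (Or.inr (by simp; omega))] at key
      simp only [Fin.val_mk, Nat.add_zero] at key
      rw [if_pos (dvd_zero k)] at key
      rw [mul_comm ((γ:F) ^ (δ * 0)) ((k:F))] at key
      exact (mul_eq_zero.mp key).resolve_right (by
        rw [mul_comm]; exact hW _)
    · intro i hne
      rw [hN0 i _ (Or.inr (by simp; omega))]
      have hik := i.isLt
      have hne' : (i : ℕ) ≠ 0 := fun h => hne (Fin.ext (by simpa using h))
      have hnd : ¬ k ∣ (i : ℕ) + 0 := by
        rw [hdvd _ (by omega)]
        push_neg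
        exact ⟨by omega, by omega⟩
      rw [if_neg hnd, mul_zero, mul_zero]
  -- step 2 : c i = 0 for ℓ < i
  have hbig : ∀ i : Fin k, ℓ < (i : ℕ) → c i = 0 := by
    intro i hi
    have hik := i.isLt
    have key := hcol ⟨k - (i : ℕ), by omega⟩ i ?_
    · rw [hN0 _ _ (Or.inr (by simp; omega))] at key
      have hsum : (i : ℕ) + ((⟨k - (i : ℕ), by omega⟩ : Fin k) : ℕ) = k := by
        simp only [Fin.val_mk]; omega
      rw [hsum, if_pos dvd_rfl] at key
      exact (mul_eq_zero.mp key).resolve_right (hW _)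
    · intro i' hne
      rw [hN0 _ _ (Or.inr (by simp; omega))]
      have hik' := i'.isLt
      have hnd : ¬ k ∣ (i' : ℕ) + ((⟨k - (i : ℕ), by omega⟩ : Fin k) : ℕ) := by
        rw [hdvd _ (by simp; omega)]
        push_neg
        refine ⟨by simp; omega, ?_⟩
        intro h
        exact hne (Fin.ext (by simp at h; omega))
      rw [if_neg hnd, mul_zero, mul_zero]
  -- step 3 : c i = 0 for 1 ≤ i ≤ ℓ
  have hsmall : ∀ i : Fin k, 1 ≤ (i : ℕ) → (i : ℕ) ≤ ℓ → c i = 0 := by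
    intro i h1 h2
    have hik := i.isLt
    have key := hcol ⟨k - (i : ℕ), by omega⟩ i ?_
    · rw [hN0 _ _ (Or.inl (by omega))] at key
      have hsum : (i : ℕ) + ((⟨k - (i : ℕ), by omega⟩ : Fin k) : ℕ) = k := by
        simp only [Fin.val_mk]; omega
      rw [hsum, if_pos dvd_rfl] at key
      exact (mul_eq_zero.mp key).resolve_right (hW _)
    · intro i' hne
      have hik' := i'.isLt
      rcases Nat.lt_or_ge (i' : ℕ) (k - ℓ) with h | h
      · rw [hN0 _ _ (Or.inl h)]
        have hnd : ¬ k ∣ (i' : ℕ) + ((⟨k - (i : ℕ), by omega⟩ : Fin k) : ℕ) := by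
          rw [hdvd _ (by simp; omega)]
          push_neg
          refine ⟨by simp; omega, ?_⟩
          intro hh
          exact hne (Fin.ext (by simp at hh; omega))
        rw [if_neg hnd, mul_zero, mul_zero]
      · rw [hbig i' (by omega), zero_mul]
  -- conclude
  have hc0 : ∀ i : Fin k, c i = 0 := by
    intro i
    rcases Nat.lt_or_ge (i : ℕ) 1 with h | h
    · have : i = ⟨0, hk1⟩ := Fin.ext (by simp only [Fin.val_mk]; omega)
      rw [this]; exact h0
    · rcases le_or_gt (i : ℕ) ℓ with h' | h'
      · exact hsmall i h h'
      · exact hbig i h'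
  rw [← hc]
  exact Finset.sum_eq_zero fun i _ => by rw [hc0 i, zero_smul]
end

section
/- Let δ be an integer with 1 ≤ δ ≤ q−1 and let β = (γ^δ·α_1, …, γ^δ·α_k) ∈ F_q^k (so n = k). If k = 2ℓ and (k : F_q)·γ^{δk} + Σ_{i=1}^{ℓ} a_{1i}² ≠ 0 in F_q, then the GRL code GRL_k(β, A) is Euclidean LCD. -/
/-!
If `x = v G` lies in `C ∩ C^⊥` then `(G Gᵀ) v = 0`, so it suffices that the Gram matrix has
trivial kernel. The evaluation points are `c` times the `k`-th roots of unity, hence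
`∑ⱼ βⱼ^(r+s)` is `k c^(r+s)` if `r + s ≡ 0 (mod k)` and `0` otherwise: the Gram matrix pairs
row `r` with column `-r`, plus the block `A Aᵀ` on the indices `≥ k - ℓ = ℓ`. Rows `r < ℓ` see
no `A`-block and force `v (-r) = 0`; then the self-paired row `ℓ` reads
`(k c^k + ∑ a₁ᵢ²) v ℓ = 0`; after that the `A`-block no longer meets the support of `v` and every
row forces `v (-r) = 0`.
-/
open Matrix BigOperators Finset

theorem IsPrimitiveRoot.sum_pow_succ_pow {F : Type} [Field F] {ζ : F} {k : ℕ}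
    (hζ : IsPrimitiveRoot ζ k) (t : ℕ) :
    ∑ j : Fin k, (ζ ^ ((j : ℕ) + 1)) ^ t = if k ∣ t then (k : F) else 0 := by
  have hsum : ∑ j : Fin k, (ζ ^ ((j : ℕ) + 1)) ^ t = ζ ^ t * ∑ i ∈ range k, (ζ ^ t) ^ i := by
    rw [mul_sum, ← Fin.sum_univ_eq_sum_range]
    exact sum_congr rfl fun j _ => by ring
  split_ifs with hkt
  · simp [hsum, (hζ.pow_eq_one_iff_dvd t).mpr hkt]
  · have hζt : (ζ ^ t) ^ k = 1 := by rw [← pow_mul, mul_comm, pow_mul, hζ.pow_eq_one, one_pow]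
    rw [hsum, geom_sum_eq (mt (hζ.pow_eq_one_iff_dvd t).mp hkt), hζt, sub_self, zero_div,
      mul_zero]

theorem span_range_inf_dualE_eq_bot {F : Type} [Field F] {κ ι : Type} [Fintype κ] [Fintype ι]
    (G : Matrix κ ι F) (hG : ∀ v, (G * Gᵀ) *ᵥ v = 0 → v = 0) :
    Submodule.span F (Set.range G) ⊓ dualE (Submodule.span F (Set.range G)) = ⊥ := by
  rw [eq_bot_iff]
  rintro x ⟨hxC, hxD⟩
  obtain ⟨v, rfl⟩ := (Submodule.mem_span_range_iff_exists_fun F).mp hxC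
  rw [← vecMul_eq_sum] at hxD ⊢
  have hv : (G * Gᵀ) *ᵥ v = 0 := by
    rw [← mulVec_mulVec, mulVec_transpose]
    funext r
    rw [mulVec, dotProduct_comm]
    exact hxD (G r) (Submodule.subset_span ⟨r, rfl⟩)
  simp [hG v hv]

theorem Fin.dvd_val_add_val_iff_eq_neg {k : ℕ} [NeZero k] (r s : Fin k) :
    k ∣ (r : ℕ) + s ↔ s = -r := by
  rw [eq_neg_iff_add_eq_zero, add_comm, Fin.ext_iff, Fin.val_add, Fin.val_zero,
    Nat.dvd_iff_mod_eq_zero]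

section GRLmatrix

variable {F : Type} [Field F] {k ℓ : ℕ} (hℓk : ℓ ≤ k) {ι : Type} (β : ι → F)
  (A : Matrix (Fin ℓ) (Fin ℓ) F)

theorem GRLmatrix_apply_inr_of_lt {r : Fin k} (hr : (r : ℕ) < k - ℓ) (j : Fin ℓ) :
    GRLmatrix k ℓ hℓk β A r (Sum.inr j) = 0 :=
  dif_pos hr

theorem GRLmatrix_sub_apply_inr (hℓ : 0 < ℓ) (j : Fin ℓ) :
    GRLmatrix k ℓ hℓk β A ⟨k - ℓ, by omega⟩ (Sum.inr j) = A ⟨0, hℓ⟩ j := by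
  simp [GRLmatrix]

theorem GRLmatrix_mul_transpose_apply [Fintype ι] (r s : Fin k) :
    (GRLmatrix k ℓ hℓk β A * (GRLmatrix k ℓ hℓk β A)ᵀ) r s =
      ∑ j, β j ^ ((r : ℕ) + s) +
        ∑ j, GRLmatrix k ℓ hℓk β A r (Sum.inr j) * GRLmatrix k ℓ hℓk β A s (Sum.inr j) := by
  simp [Matrix.mul_apply, Fintype.sum_sum_type, GRLmatrix, pow_add]

end GRLmatrix

section RootsOfUnity

variable {F : Type} [Field F] {k ℓ : ℕ} [NeZero k] (hℓk : ℓ ≤ k) {c ζ : F}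
  (A : Matrix (Fin ℓ) (Fin ℓ) F)

local notation "𝒢" => GRLmatrix k ℓ hℓk (fun j : Fin k => c * ζ ^ ((j : ℕ) + 1)) A

theorem GRLmatrix_roots_mul_transpose_mulVec_apply (hζ : IsPrimitiveRoot ζ k) (v : Fin k → F)
    (r : Fin k) :
    ((𝒢 * 𝒢ᵀ) *ᵥ v) r = k * c ^ ((r : ℕ) + (-r : Fin k)) * v (-r) +
      ∑ s, (∑ j, 𝒢 r (Sum.inr j) * 𝒢 s (Sum.inr j)) * v s := by
  have hentry : ∀ s, (𝒢 * 𝒢ᵀ) r s =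
      (if s = -r then k * c ^ ((r : ℕ) + s) else 0) +
        ∑ j, 𝒢 r (Sum.inr j) * 𝒢 s (Sum.inr j) := fun s => by
    rw [GRLmatrix_mul_transpose_apply]
    simp only [mul_pow, ← Finset.mul_sum, hζ.sum_pow_succ_pow, Fin.dvd_val_add_val_iff_eq_neg]
    split_ifs <;> ring
  simp only [mulVec, dotProduct, hentry, add_mul, sum_add_distrib, ite_mul, zero_mul,
    sum_ite_eq', mem_univ, if_true]

theorem eq_zero_of_GRLmatrix_roots_mul_transpose_mulVec_eq_zero (hk : k = 2 * ℓ) (hℓ : 0 < ℓ)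
    (hζ : IsPrimitiveRoot ζ k) (hc : c ≠ 0)
    (hne : (k : F) * c ^ k + ∑ i : Fin ℓ, A ⟨0, hℓ⟩ i ^ 2 ≠ 0) (v : Fin k → F)
    (hv : (𝒢 * 𝒢ᵀ) *ᵥ v = 0) : v = 0 := by
  have hkF : (k : F) ≠ 0 := hζ.neZero'.out
  have htail : ∀ r s : Fin k, (r : ℕ) < ℓ ∨ (s : ℕ) < ℓ →
      ∑ j, 𝒢 r (Sum.inr j) * 𝒢 s (Sum.inr j) = 0 := by
    rintro r s (hr | hs)
    · simp [GRLmatrix_apply_inr_of_lt hℓk _ A (show (r : ℕ) < k - ℓ by omega)]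
    · simp [GRLmatrix_apply_inr_of_lt hℓk _ A (show (s : ℕ) < k - ℓ by omega)]
  have hrow : ∀ r, ∑ s, (∑ j, 𝒢 r (Sum.inr j) * 𝒢 s (Sum.inr j)) * v s = 0 → v (-r) = 0 := by
    intro r h
    have := GRLmatrix_roots_mul_transpose_mulVec_apply hℓk (c := c) A hζ v r
    rw [hv, h, add_zero, Pi.zero_apply, eq_comm] at this
    simpa [hkF, hc] using this
  have hlow : ∀ s : Fin k, ((-s : Fin k) : ℕ) < ℓ → v s = 0 := fun s hs => by
    simpa using hrow (-s) (sum_eq_zero fun t _ => by rw [htail _ _ (Or.inl hs), zero_mul])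
  have hhigh : ∀ s : Fin k, ℓ < (s : ℕ) → v s = 0 := fun s hs => hlow s (by
    rw [Fin.val_neg]; split_ifs <;> omega)
  set m : Fin k := ⟨k - ℓ, by omega⟩
  have hm : -m = m := by ext; rw [Fin.val_neg]; split_ifs <;> simp [m] at * <;> omega
  have hmid : v m = 0 := by
    have hsum : ∑ s, (∑ j, 𝒢 m (Sum.inr j) * 𝒢 s (Sum.inr j)) * v s =
        (∑ i, A ⟨0, hℓ⟩ i ^ 2) * v m := by
      rw [sum_eq_single m]
      · have hrow_m : ∀ j, 𝒢 m (Sum.inr j) = A ⟨0, hℓ⟩ j := GRLmatrix_sub_apply_inr hℓk _ A hℓ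
        simp only [hrow_m, sq]
      · intro s _ hsm
        rcases lt_or_gt_of_ne (Fin.val_ne_of_ne hsm) with hs | hs
        · rw [htail _ _ (Or.inr (by simp [m] at hs; omega)), zero_mul]
        · rw [hhigh s (by simp [m] at hs; omega), mul_zero]
      · simp
    have := GRLmatrix_roots_mul_transpose_mulVec_apply hℓk (c := c) A hζ v m
    rw [hv, hsum, hm, show (m : ℕ) + m = k by simp [m]; omega, ← add_mul, Pi.zero_apply,
      eq_comm] at this
    exact (mul_eq_zero.mp this).resolve_left hne
  funext s
  rw [← neg_neg s]
  refine hrow (-s) (sum_eq_zero fun t _ => ?_)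
  rcases lt_or_ge (t : ℕ) ℓ with ht | ht
  · rw [htail _ _ (Or.inr ht), zero_mul]
  · rcases ht.eq_or_lt with ht | ht
    · rw [show t = m from Fin.ext (by simp [m]; omega), hmid, mul_zero]
    · rw [hhigh t ht, mul_zero]

end RootsOfUnity

/-- if `k = 2ℓ` and `k·γ^{δk} + Σ a_{1i}² ≠ 0`, the GRL code with
`β = (γ^δ·α_1, …, γ^δ·α_k)` is Euclidean LCD. -/
theorem stmt1 {F : Type} [Field F] [Fintype F]
    (γ : Fˣ) (hγ : ∀ x : Fˣ, x ∈ Subgroup.zpowers γ)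
    (k ℓ : ℕ) (hℓ2 : 2 ≤ ℓ) (hℓk : ℓ ≤ k) (hkdvd : k ∣ Fintype.card F - 1)
    (A : Matrix (Fin ℓ) (Fin ℓ) F)
    (α : Fin k → F)
    (hα : ∀ i : Fin k, α i = (γ : F) ^ ((Fintype.card F - 1) / k * ((i : ℕ) + 1)))
    (δ : ℕ)
    (β : Fin k → F) (hβ : ∀ i, β i = (γ : F) ^ δ * α i)
    (hk2ℓ : k = 2 * ℓ)
    (hne : (k : F) * (γ : F) ^ (δ * k) + ∑ i : Fin ℓ, A ⟨0, by omega⟩ i ^ 2 ≠ 0) :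
    GRLcode k ℓ hℓk β A ⊓ dualE (GRLcode k ℓ hℓk β A) = ⊥ := by
  classical
  have : NeZero k := ⟨by omega⟩
  have hγ_prim : IsPrimitiveRoot (γ : F) (Fintype.card F - 1) := by
    rw [IsPrimitiveRoot.coe_units_iff, ← Fintype.card_units, ← Nat.card_eq_fintype_card,
      ← orderOf_eq_card_of_forall_mem_zpowers hγ]
    exact IsPrimitiveRoot.orderOf γ
  have hζ : IsPrimitiveRoot ((γ : F) ^ ((Fintype.card F - 1) / k)) k :=
    hγ_prim.pow (Fintype.card_units (α := F) ▸ Fintype.card_pos)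
      (Nat.div_mul_cancel hkdvd).symm
  obtain rfl : β = fun j : Fin k =>
      (γ : F) ^ δ * ((γ : F) ^ ((Fintype.card F - 1) / k)) ^ ((j : ℕ) + 1) :=
    funext fun j => by rw [hβ, hα, pow_mul]
  refine span_range_inf_dualE_eq_bot _
    (eq_zero_of_GRLmatrix_roots_mul_transpose_mulVec_eq_zero hℓk A hk2ℓ (by omega) hζ (by simp) ?_)
  rwa [← pow_mul]
end

section
/- Let δ be an integer with 1 ≤ δ ≤ q−1, assume gcd(k+1, q) = 1, and let β = (0, γ^δ·α_1, …, γ^δ·α_k) ∈ F_q^{k+1} (so n = k+1). If 2ℓ < k, or if k = 2ℓ and (k : F_q)·γ^{δk} + Σ_{i=1}^{ℓ} a_{1i}² ≠ 0 in F_q, then the GRL code GRL_k(β, A) is Euclidean LCD. -/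
open Matrix BigOperators Finset

lemma char_sum {F : Type} [Field F] (γ : Fˣ) (k e : ℕ)
    (h1 : (γ : F) ^ (e * k) = 1) (hdvd : ∀ t, (γ : F) ^ (e * t) = 1 → k ∣ t) (δ t : ℕ) :
    ∑ i : Fin k, ((γ : F) ^ δ * (γ : F) ^ (e * ((i : ℕ) + 1))) ^ t =
      if k ∣ t then (k : F) * (γ : F) ^ (δ * t) else 0 := by
  have hterm : ∀ i : Fin k, ((γ : F) ^ δ * (γ : F) ^ (e * ((i : ℕ) + 1))) ^ t
      = (γ : F) ^ (δ * t) * (((γ : F) ^ (e * t)) ^ ((i : ℕ)) * (γ : F) ^ (e * t)) := by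
    intro i
    rw [mul_pow, ← pow_mul, ← pow_mul, ← pow_mul, ← pow_add]
    congr 1
    ring
  rw [Finset.sum_congr rfl fun i _ => hterm i]
  rw [← Finset.mul_sum, ← Finset.sum_mul]
  set z := (γ : F) ^ (e * t) with hz
  have hzk : z ^ k = 1 := by
    rw [hz, ← pow_mul]
    calc (γ : F) ^ (e * t * k) = ((γ : F) ^ (e * k)) ^ t := by rw [← pow_mul]; congr 1; ring
    _ = 1 := by rw [h1, one_pow]
  by_cases hkt : k ∣ t
  · rw [if_pos hkt]
    obtain ⟨u, rfl⟩ := hkt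
    have hz1 : z = 1 := by
      rw [hz]
      calc (γ : F) ^ (e * (k * u)) = ((γ : F) ^ (e * k)) ^ u := by rw [← pow_mul]; congr 1; ring
      _ = 1 := by rw [h1, one_pow]
    simp [hz1]
    ring
  · rw [if_neg hkt]
    have hz1 : z ≠ 1 := fun h => hkt (hdvd t h)
    have : ∑ i : Fin k, z ^ (i : ℕ) = 0 := by
      rw [Fin.sum_univ_eq_sum_range, geom_sum_eq hz1, hzk, sub_self, zero_div]
    rw [this, zero_mul, mul_zero]

/-- with `gcd(k+1, q) = 1` and `β = (0, γ^δ·α_1, …, γ^δ·α_k)`,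
if `2ℓ < k`, or `k = 2ℓ` and `k·γ^{δk} + Σ a_{1i}² ≠ 0`, the GRL code is Euclidean LCD. -/
theorem stmt3 {F : Type} [Field F] [Fintype F]
    (p m : ℕ) (hp : p.Prime) (hodd : Odd p) (hm : 0 < m)
    (hcard : Fintype.card F = p ^ m)
    (γ : Fˣ) (hγ : ∀ x : Fˣ, x ∈ Subgroup.zpowers γ)
    (k ℓ : ℕ) (hℓ2 : 2 ≤ ℓ) (hℓk : ℓ ≤ k) (hkdvd : k ∣ Fintype.card F - 1)
    (A : Matrix (Fin ℓ) (Fin ℓ) F) (hA : IsUnit A.det)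
    (α : Fin k → F)
    (hα : ∀ i : Fin k, α i = (γ : F) ^ ((Fintype.card F - 1) / k * ((i : ℕ) + 1)))
    (δ : ℕ) (hδ1 : 1 ≤ δ) (hδq : δ ≤ Fintype.card F - 1)
    (hgcd : Nat.gcd (k + 1) (Fintype.card F) = 1)
    (β : Fin (k + 1) → F) (hβ : β = Fin.cons 0 (fun i => (γ : F) ^ δ * α i))
    (hcase : 2 * ℓ < k ∨
      (k = 2 * ℓ ∧ (k : F) * (γ : F) ^ (δ * k) + ∑ i : Fin ℓ, A ⟨0, by omega⟩ i ^ 2 ≠ 0)) :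
    GRLcode k ℓ hℓk β A ⊓ dualE (GRLcode k ℓ hℓk β A) = ⊥ := by
  classical
  set q := Fintype.card F with hq
  have hq1 : 1 < q := Fintype.one_lt_card
  have hlk : ℓ < k := by rcases hcase with h | ⟨h, _⟩ <;> omega
  have hk0 : 0 < k := by omega
  set e := (q - 1) / k with he
  have hek : e * k = q - 1 := Nat.div_mul_cancel hkdvd
  have he0 : 0 < e := by
    rcases Nat.eq_zero_or_pos e with h | h
    · rw [h, zero_mul] at hek; omega
    · exact h
  -- ring characteristic facts
  set c := ringChar F with hcring
  have hcdvdq : c ∣ q := by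
    rw [← ringChar.spec]
    exact FiniteField.cast_card_eq_zero F
  have hc1 : c ≠ 1 := by
    intro h
    have : ((1 : ℕ) : F) = 0 := by rw [← h]; exact ringChar.spec F c |>.mpr dvd_rfl
    simp at this
  have hknz : (k : F) ≠ 0 := by
    intro h
    have hck : c ∣ k := (ringChar.spec F k).mp h
    have h2 : c ∣ q - 1 := hck.trans hkdvd
    have h3 : c ∣ q - (q - 1) := Nat.dvd_sub hcdvdq h2
    have h4 : q - (q - 1) = 1 := by omega
    rw [h4] at h3
    exact hc1 (Nat.dvd_one.mp h3)
  have hk1nz : ((k : F) + 1) ≠ 0 := by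
    intro h
    have h0 : ((k + 1 : ℕ) : F) = 0 := by push_cast; rw [h]
    have hck : c ∣ k + 1 := (ringChar.spec F (k + 1)).mp h0
    have h3 : c ∣ Nat.gcd (k + 1) q := Nat.dvd_gcd hck hcdvdq
    rw [hgcd] at h3
    exact hc1 (Nat.dvd_one.mp h3)
  have hord : orderOf γ = q - 1 := by
    rw [orderOf_eq_card_of_forall_mem_zpowers hγ, Nat.card_units, Nat.card_eq_fintype_card]
  have hγq1 : (γ : F) ^ (e * k) = 1 := by
    rw [hek]
    have := pow_orderOf_eq_one γ
    rw [hord] at this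
    calc ((γ : F)) ^ (q - 1) = ((γ ^ (q - 1) : Fˣ) : F) := by push_cast; ring
    _ = ((1 : Fˣ) : F) := by rw [this]
    _ = 1 := Units.val_one
  have hdvdk : ∀ t, (γ : F) ^ (e * t) = 1 → k ∣ t := by
    intro t h
    have hu : γ ^ (e * t) = 1 := Units.ext (by push_cast; exact h)
    have h1 : orderOf γ ∣ e * t := orderOf_dvd_of_pow_eq_one hu
    rw [hord, ← hek] at h1
    exact (Nat.mul_dvd_mul_iff_left he0).mp h1
  set G := GRLmatrix k ℓ hℓk β A with hG
  set w := (k : F) * (γ : F) ^ (δ * k) with hw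
  have hwnz : w ≠ 0 := mul_ne_zero hknz (pow_ne_zero _ (Units.ne_zero γ))
  -- the Gram matrix entries
  have hMfull : ∀ s r : Fin k, (∑ j, G s j * G r j) =
      (if (s : ℕ) + (r : ℕ) = 0 then (k : F) + 1 else 0) +
      ((if (s : ℕ) + (r : ℕ) = k then w else 0) +
        ∑ j' : Fin ℓ, G s (Sum.inr j') * G r (Sum.inr j')) := by
    intro s r
    rw [Fintype.sum_sum_type, ← add_assoc]
    congr 1
    have h1 : ∀ j : Fin (k + 1), G s (Sum.inl j) * G r (Sum.inl j)
        = β j ^ ((s : ℕ) + (r : ℕ)) := by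
      intro j
      simp only [hG, GRLmatrix, Sum.elim_inl, pow_add]
    rw [Finset.sum_congr rfl fun j _ => h1 j, hβ, Fin.sum_univ_succ]
    simp only [Fin.cons_zero, Fin.cons_succ]
    simp_rw [hα]
    rw [char_sum γ k e hγq1 hdvdk δ ((s : ℕ) + (r : ℕ))]
    set t := (s : ℕ) + (r : ℕ) with ht
    have hsl := s.isLt
    have hrl := r.isLt
    by_cases ht0 : t = 0
    · rw [ht0]
      rw [if_pos rfl, if_pos (dvd_zero k), if_neg (by omega : ¬ (0 : ℕ) = k)]
      simp [add_comm]
    · by_cases htk : t = k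
      · rw [if_neg ht0, if_pos htk, if_pos (htk ▸ dvd_refl k), zero_pow ht0, htk]
        try ring
      · have hndvd : ¬ k ∣ t := by
          intro hdv
          obtain ⟨u, hu⟩ := hdv
          have hu2 : u < 2 := by
            by_contra hcon
            push_neg at hcon
            have : k * 2 ≤ k * u := Nat.mul_le_mul_left k hcon
            omega
          interval_cases u <;> omega
        rw [if_neg ht0, if_neg htk, if_neg hndvd, zero_pow ht0]
        try ring
  -- membership and the key linear relations
  rw [eq_bot_iff]
  intro x hx
  rw [Submodule.mem_inf] at hx
  obtain ⟨hxC, hxD⟩ := hx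
  rw [GRLcode] at hxC
  obtain ⟨co, hco⟩ := (Submodule.mem_span_range_iff_exists_fun F).mp hxC
  have hxDapp : ∀ r : Fin k, ∑ j, x j * G r j = 0 := fun r =>
    hxD (G r) (Submodule.subset_span ⟨r, rfl⟩)
  have key : ∀ r : Fin k, ∑ s : Fin k, co s * ∑ j, G s j * G r j = 0 := by
    intro r
    calc ∑ s : Fin k, co s * ∑ j, G s j * G r j
        = ∑ j, x j * G r j := by
          rw [← hco]
          simp only [Finset.mul_sum]
          rw [Finset.sum_comm]
          refine Finset.sum_congr rfl fun j _ => ?_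
          simp [Finset.sum_apply, Pi.smul_apply, smul_eq_mul, Finset.sum_mul, mul_assoc]
          rfl
      _ = 0 := hxDapp r
  -- rewrite via the Gram computation
  have key2 : ∀ r : Fin k,
      (∑ s : Fin k, co s * (if (s : ℕ) + (r : ℕ) = 0 then (k : F) + 1 else 0)) +
      ((∑ s : Fin k, co s * (if (s : ℕ) + (r : ℕ) = k then w else 0)) +
        ∑ s : Fin k, co s * ∑ j' : Fin ℓ, G s (Sum.inr j') * G r (Sum.inr j')) = 0 := by
    intro r
    have := key r
    simp_rw [hMfull, mul_add] at this
    rw [Finset.sum_add_distrib, Finset.sum_add_distrib] at this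
    exact this
  -- vanishing of the A-block columns for small row index
  have hBr : ∀ r : Fin k, (r : ℕ) < k - ℓ → ∀ s : Fin k,
      ∑ j' : Fin ℓ, G s (Sum.inr j') * G r (Sum.inr j') = 0 := by
    intro r hr s
    refine Finset.sum_eq_zero fun j' _ => ?_
    simp only [hG, GRLmatrix, Sum.elim_inr, dif_pos hr, mul_zero]
  have hBs : ∀ s : Fin k, (s : ℕ) < k - ℓ → ∀ r : Fin k, ∀ j' : Fin ℓ,
      G s (Sum.inr j') * G r (Sum.inr j') = 0 := by
    intro s hs r j'
    simp only [hG, GRLmatrix, Sum.elim_inr, dif_pos hs, zero_mul]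
  -- the first and second sums in key2, simplified
  have hsum1 : ∀ r : Fin k, 1 ≤ (r : ℕ) →
      (∑ s : Fin k, co s * (if (s : ℕ) + (r : ℕ) = 0 then (k : F) + 1 else 0)) = 0 := by
    intro r hr
    refine Finset.sum_eq_zero fun s _ => ?_
    rw [if_neg (by omega), mul_zero]
  have hsum2 : ∀ r : Fin k, ∀ hr : 1 ≤ (r : ℕ),
      (∑ s : Fin k, co s * (if (s : ℕ) + (r : ℕ) = k then w else 0))
        = co ⟨k - (r : ℕ), Nat.sub_lt hk0 hr⟩ * w := by
    intro r hr
    refine Finset.sum_eq_single_of_mem (⟨k - (r : ℕ), by omega⟩ : Fin k)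
      (Finset.mem_univ _) ?_ |>.trans ?_
    · intro s _ hne
      rw [if_neg, mul_zero]
      intro hsr
      exact hne (Fin.ext (by simp; omega))
    · have hrl := r.isLt
      rw [if_pos (by simp only [Fin.val_mk]; omega)]
  -- the row equations for rows 1 ≤ r
  have hrow : ∀ r : Fin k, ∀ hr : 1 ≤ (r : ℕ),
      co ⟨k - (r : ℕ), Nat.sub_lt hk0 hr⟩ * w +
      ∑ s : Fin k, co s * ∑ j' : Fin ℓ, G s (Sum.inr j') * G r (Sum.inr j') = 0 := by
    intro r hr
    have := key2 r
    rw [hsum1 r hr, hsum2 r hr, zero_add] at this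
    exact this
  -- row 0 gives co 0 = 0
  have hc0 : co ⟨0, hk0⟩ = 0 := by
    have h0 := key2 ⟨0, hk0⟩
    have e1 : (∑ s : Fin k, co s * (if (s : ℕ) + ((⟨0, hk0⟩ : Fin k) : ℕ) = 0
        then (k : F) + 1 else 0)) = co ⟨0, hk0⟩ * ((k : F) + 1) := by
      refine Finset.sum_eq_single_of_mem (⟨0, hk0⟩ : Fin k) (Finset.mem_univ _) ?_ |>.trans ?_
      · intro s _ hne
        rw [if_neg, mul_zero]
        intro hsr
        exact hne (Fin.ext (by simp at hsr ⊢; omega))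
      · rw [if_pos (by simp)]
    have e2 : (∑ s : Fin k, co s * (if (s : ℕ) + ((⟨0, hk0⟩ : Fin k) : ℕ) = k
        then w else 0)) = 0 := by
      refine Finset.sum_eq_zero fun s _ => ?_
      have := s.isLt
      rw [if_neg (by simp; omega), mul_zero]
    have e3 := hBr ⟨0, hk0⟩ (by simp; omega)
    rw [e1, e2] at h0
    simp_rw [e3] at h0
    simp only [mul_zero, Finset.sum_const_zero, add_zero, zero_add] at h0
    have h1k : (k : F) + 1 ≠ 0 := hk1nz
    exact (mul_eq_zero.mp h0).resolve_right h1k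
  -- rows 1 ≤ r ≤ k - ℓ - 1 give co s = 0 for s > ℓ
  have hhigh : ∀ s : Fin k, ℓ < (s : ℕ) → co s = 0 := by
    intro s hs
    have hsl := s.isLt
    have h := hrow ⟨k - (s : ℕ), by omega⟩ (by simp; omega)
    have e3 := hBr ⟨k - (s : ℕ), by omega⟩ (by simp; omega)
    simp_rw [e3] at h
    simp only [mul_zero, Finset.sum_const_zero, add_zero] at h
    have heq : (⟨k - (k - (s : ℕ)), by omega⟩ : Fin k) = s := Fin.ext (by simp; omega)
    rw [heq] at h
    exact (mul_eq_zero.mp h).resolve_right hwnz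
  -- reformulated row equations
  have hrow2 : ∀ r s : Fin k, (s : ℕ) + (r : ℕ) = k →
      co s * w + ∑ s' : Fin k, co s' * ∑ j' : Fin ℓ, G s' (Sum.inr j') * G r (Sum.inr j') = 0 := by
    intro r s hsr
    have hr : 1 ≤ (r : ℕ) := by have := s.isLt; omega
    have h := hrow r hr
    have heq : (⟨k - (r : ℕ), Nat.sub_lt hk0 hr⟩ : Fin k) = s :=
      Fin.ext (by simp only [Fin.val_mk]; omega)
    rw [heq] at h
    exact h
  have h2l : 2 * ℓ ≤ k := by rcases hcase with h | ⟨h, _⟩ <;> omega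
  -- co ℓ = 0
  have hmid : co ⟨ℓ, hlk⟩ = 0 := by
    have h := hrow2 ⟨k - ℓ, by omega⟩ ⟨ℓ, hlk⟩ (by simp only [Fin.val_mk]; omega)
    rcases hcase with hcase1 | ⟨hcase2, hne⟩
    · have hsz : ∑ s' : Fin k, co s' *
          ∑ j' : Fin ℓ, G s' (Sum.inr j') * G (⟨k - ℓ, by omega⟩ : Fin k) (Sum.inr j') = 0 := by
        refine Finset.sum_eq_zero fun s' _ => ?_
        by_cases hs' : (s' : ℕ) < k - ℓ
        · rw [Finset.sum_eq_zero fun j' _ => hBs s' hs' _ j', mul_zero]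
        · rw [hhigh s' (by omega), zero_mul]
      rw [hsz, add_zero] at h
      exact (mul_eq_zero.mp h).resolve_right hwnz
    · have hsz : ∑ s' : Fin k, co s' *
          ∑ j' : Fin ℓ, G s' (Sum.inr j') * G (⟨k - ℓ, by omega⟩ : Fin k) (Sum.inr j')
          = co ⟨ℓ, hlk⟩ *
          ∑ j' : Fin ℓ, G (⟨ℓ, hlk⟩ : Fin k) (Sum.inr j') *
            G (⟨k - ℓ, by omega⟩ : Fin k) (Sum.inr j') := by
        refine Finset.sum_eq_single_of_mem (⟨ℓ, hlk⟩ : Fin k) (Finset.mem_univ _) ?_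
        intro s' _ hne'
        by_cases hs' : (s' : ℕ) < k - ℓ
        · rw [Finset.sum_eq_zero fun j' _ => hBs s' hs' _ j', mul_zero]
        · have : ℓ < (s' : ℕ) := by
            rcases Nat.lt_or_ge ℓ (s' : ℕ) with h1 | h1
            · exact h1
            · exfalso
              exact hne' (Fin.ext (by simp only [Fin.val_mk]; omega))
          rw [hhigh s' this, zero_mul]
      rw [hsz] at h
      have hBval : ∑ j' : Fin ℓ, G (⟨ℓ, hlk⟩ : Fin k) (Sum.inr j') *
          G (⟨k - ℓ, by omega⟩ : Fin k) (Sum.inr j')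
          = ∑ i : Fin ℓ, A ⟨0, by omega⟩ i ^ 2 := by
        refine Finset.sum_congr rfl fun j' _ => ?_
        simp only [hG, GRLmatrix, Sum.elim_inr, Fin.val_mk]
        rw [dif_neg (by omega), dif_neg (by omega)]
        have e1 : ℓ - (k - ℓ) = 0 := by omega
        have e2 : k - ℓ - (k - ℓ) = 0 := by omega
        simp_rw [e1, e2, sq]
      rw [hBval, ← mul_add] at h
      exact (mul_eq_zero.mp h).resolve_right hne
  -- co s = 0 for 1 ≤ s < ℓ
  have hlow : ∀ s : Fin k, 1 ≤ (s : ℕ) → (s : ℕ) < ℓ → co s = 0 := by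
    intro s hs1 hsl
    have h := hrow2 ⟨k - (s : ℕ), by omega⟩ s (by simp only [Fin.val_mk]; have := s.isLt; omega)
    have hsz : ∑ s' : Fin k, co s' *
        ∑ j' : Fin ℓ, G s' (Sum.inr j') * G (⟨k - (s : ℕ), by omega⟩ : Fin k) (Sum.inr j') = 0 := by
      refine Finset.sum_eq_zero fun s' _ => ?_
      by_cases hs' : (s' : ℕ) < k - ℓ
      · rw [Finset.sum_eq_zero fun j' _ => hBs s' hs' _ j', mul_zero]
      · rcases Nat.lt_or_ge ℓ (s' : ℕ) with h1 | h1
        · rw [hhigh s' h1, zero_mul]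
        · have : s' = (⟨ℓ, hlk⟩ : Fin k) := Fin.ext (by simp only [Fin.val_mk]; omega)
          rw [this, hmid, zero_mul]
    rw [hsz, add_zero] at h
    exact (mul_eq_zero.mp h).resolve_right hwnz
  -- all coefficients vanish
  have hall : ∀ s : Fin k, co s = 0 := by
    intro s
    rcases Nat.lt_or_ge (s : ℕ) 1 with h1 | h1
    · have : s = (⟨0, hk0⟩ : Fin k) := Fin.ext (by simp only [Fin.val_mk]; omega)
      rw [this]; exact hc0
    · rcases Nat.lt_or_ge (s : ℕ) ℓ with h2 | h2
      · exact hlow s h1 h2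
      · rcases Nat.lt_or_ge ℓ (s : ℕ) with h3 | h3
        · exact hhigh s h3
        · have : s = (⟨ℓ, hlk⟩ : Fin k) := Fin.ext (by simp only [Fin.val_mk]; omega)
          rw [this]; exact hmid
  rw [Submodule.mem_bot]
  rw [← hco]
  exact Finset.sum_eq_zero fun s _ => by rw [hall s, zero_smul]
end

section
/- Let s, t be integers with 1 ≤ s, t ≤ q−1 and s ≠ t. If (q−1)/k does not divide s−t and v₂(s−t) ≠ v₂(q−1) − v₂(k) − 1, then the 2k elements γ^s·α_1, …, γ^s·α_k, γ^t·α_1, …, γ^t·α_k of F_q are pairwise distinct, and γ^{sk} + γ^{tk} ≠ 0 in F_q. -/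
/-!
Since `γ` has order `n = q - 1 = d k` with `d = (q - 1)/k`, two powers `γ^a`, `γ^b` agree iff
`n ∣ b - a`. Because `α_i = γ^{d(i+1)}`, a coincidence `γ^s α_i = γ^s α_j` forces `k ∣ j - i`, and
`γ^s α_i = γ^t α_j` forces `d ∣ s - t`. If `γ^{sk} + γ^{tk} = 0`, then `γ^{(s-t)k} = -1` has order `2`
(the characteristic is odd), so `n ∣ 2(s-t)k` but `n ∤ (s-t)k`; comparing `2`-adic valuations gives
`v₂(s-t) + v₂(k) + 1 = v₂(n)`.
-/

open Function

theorem IsOfFinOrder.intCast_orderOf_dvd_sub_of_pow_eq_pow {M : Type*} [Monoid M] {x : M}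
    (hx : IsOfFinOrder x) {a b : ℕ} (h : x ^ a = x ^ b) : (orderOf x : ℤ) ∣ b - a :=
  Nat.modEq_iff_dvd.mp (hx.pow_eq_pow_iff_modEq.mp h)

theorem Fin.eq_of_intCast_dvd_sub {k : ℕ} {i j : Fin k} (h : (k : ℤ) ∣ (j : ℤ) - i) : i = j := by
  have hij : (j : ℤ) - i = 0 :=
    Int.eq_zero_of_abs_lt_dvd h (by rw [abs_lt]; constructor <;> omega)
  ext
  omega

theorem injective_sum_elim_pow_mul {M : Type*} [Monoid M] {x : M} (hx : IsOfFinOrder x)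
    {d k : ℕ} (hxdk : orderOf x = d * k) {α : Fin k → M}
    (hα : ∀ i : Fin k, α i = x ^ (d * ((i : ℕ) + 1))) {s t : ℕ} (hst : ¬ (d : ℤ) ∣ s - t) :
    Injective (Sum.elim (fun i => x ^ s * α i) (fun i => x ^ t * α i)) := by
  have dvd_of_eq : ∀ (u v : ℕ) (i j : Fin k), x ^ u * α i = x ^ v * α j →
      (d : ℤ) * k ∣ ((v : ℤ) - u) + d * ((j : ℤ) - i) := by
    intro u v i j h
    rw [hα, hα, ← pow_add, ← pow_add] at h
    have hn := hx.intCast_orderOf_dvd_sub_of_pow_eq_pow h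
    rw [hxdk] at hn
    convert hn using 1 <;> push_cast <;> ring
  have same : ∀ (u : ℕ) (i j : Fin k), x ^ u * α i = x ^ u * α j → i = j := by
    intro u i j h
    have hd : (d : ℤ) ≠ 0 :=
      Nat.cast_ne_zero.mpr (left_ne_zero_of_mul (hxdk ▸ hx.orderOf_pos.ne'))
    have hdk := dvd_of_eq u u i j h
    rw [sub_self, zero_add] at hdk
    exact Fin.eq_of_intCast_dvd_sub ((mul_dvd_mul_iff_left hd).mp hdk)
  have cross : ∀ (u v : ℕ) (i j : Fin k), ¬ (d : ℤ) ∣ u - v → x ^ u * α i ≠ x ^ v * α j := by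
    intro u v i j huv h
    have hvu := (dvd_mul_right _ _).trans (dvd_of_eq u v i j h)
    rw [dvd_add_left (dvd_mul_right _ _), dvd_sub_comm] at hvu
    exact huv hvu
  rintro (i | i) (j | j) h
  · exact congrArg Sum.inl (same s i j h)
  · exact absurd h (cross s t i j hst)
  · exact absurd h (cross t s i j (by rwa [dvd_sub_comm]))
  · exact congrArg Sum.inr (same t i j h)

theorem padicValInt_two_add_one_eq_of_dvd_two_mul {n e : ℤ} (he : e ≠ 0) (h2 : n ∣ 2 * e)
    (h1 : ¬ n ∣ e) : padicValInt 2 e + 1 = padicValInt 2 n := by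
  obtain ⟨w, hw⟩ := h2
  have hw_odd : Odd w := by
    rcases Int.even_or_odd w with ⟨w', rfl⟩ | hodd
    · exact absurd ⟨w', by linarith⟩ h1
    · exact hodd
  have hn : n ≠ 0 := by rintro rfl; omega
  have hw0 : w ≠ 0 := by rintro rfl; exact Int.not_even_iff_odd.mpr hw_odd Even.zero
  have hvw : padicValInt 2 w = 0 := padicValInt.eq_zero_of_not_dvd
    (by simpa [← even_iff_two_dvd] using Int.not_even_iff_odd.mpr hw_odd)
  have hval := congrArg (padicValInt 2) hw
  rw [padicValInt.mul two_ne_zero he, padicValInt.mul hn hw0, hvw, add_zero,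
    show (2 : ℤ) = ((2 : ℕ) : ℤ) from rfl, padicValInt_self] at hval
  omega

theorem padicValInt_two_add_one_eq_of_orderOf_zpow_eq_two {G : Type*} [Group G] {g : G} {e : ℤ}
    (h : orderOf (g ^ e) = 2) : padicValInt 2 e + 1 = padicValNat 2 (orderOf g) := by
  have hne : g ^ e ≠ 1 := fun h1 => by simp [h1] at h
  have he : e ≠ 0 := by rintro rfl; exact hne (zpow_zero g)
  have hsq : g ^ (2 * e) = 1 := by
    rw [mul_comm, zpow_mul, zpow_two, ← pow_two, ← h, pow_orderOf_eq_one]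
  rw [← padicValInt.of_nat]
  exact padicValInt_two_add_one_eq_of_dvd_two_mul he (orderOf_dvd_iff_zpow_eq_one.mpr hsq)
    (mt orderOf_dvd_iff_zpow_eq_one.mp hne)

theorem Units.zpow_sub_eq_neg_one_of_pow_add_pow_eq_zero {R : Type*} [Ring R] {u : Rˣ} {a b : ℕ}
    (h : (u : R) ^ a + (u : R) ^ b = 0) : u ^ ((a : ℤ) - b) = -1 := by
  have hab : u ^ a = -u ^ b := Units.ext (by push_cast; exact eq_neg_of_add_eq_zero_left h)
  rw [zpow_sub, zpow_natCast, zpow_natCast, hab, neg_mul, mul_inv_cancel]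

theorem stmt5_general {F : Type} [Field F] [Fintype F]
    (p m : ℕ) (hodd : Odd p)
    (hcard : Fintype.card F = p ^ m)
    (γ : Fˣ) (hγ : ∀ x : Fˣ, x ∈ Subgroup.zpowers γ)
    (k : ℕ) (hkdvd : k ∣ Fintype.card F - 1)
    (α : Fin k → F)
    (hα : ∀ i : Fin k, α i = (γ : F) ^ ((Fintype.card F - 1) / k * ((i : ℕ) + 1)))
    (s t : ℕ)
    (hdvd : ¬ ((((Fintype.card F - 1) / k : ℕ) : ℤ) ∣ ((s : ℤ) - (t : ℤ))))
    (hv2 : (padicValNat 2 ((s : ℤ) - (t : ℤ)).natAbs : ℤ) ≠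
      (padicValNat 2 (Fintype.card F - 1) : ℤ) - (padicValNat 2 k : ℤ) - 1) :
    Function.Injective (Sum.elim (fun i : Fin k => (γ : F) ^ s * α i)
        (fun i : Fin k => (γ : F) ^ t * α i)) ∧
      (γ : F) ^ (s * k) + (γ : F) ^ (t * k) ≠ 0 := by
  have hord : orderOf γ = Fintype.card F - 1 := by
    rw [orderOf_eq_card_of_forall_mem_zpowers hγ, Nat.card_units, Nat.card_eq_fintype_card]
  refine ⟨injective_sum_elim_pow_mul (Units.isOfFinOrder_val.mpr (isOfFinOrder_of_finite γ))
    (by rw [orderOf_units, hord, Nat.div_mul_cancel hkdvd]) hα hdvd, fun hzero => hv2 ?_⟩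
  have hchar : ringChar F ≠ 2 := by
    rw [Ne, FiniteField.even_card_iff_char_two, hcard, Nat.odd_iff.mp hodd.pow]
    decide
  have horder : orderOf (γ ^ (((s : ℤ) - t) * k)) = 2 := by
    rw [show ((s : ℤ) - t) * k = ((s * k : ℕ) : ℤ) - (t * k : ℕ) by push_cast; ring,
      Units.zpow_sub_eq_neg_one_of_pow_add_pow_eq_zero hzero, ← orderOf_units]
    simp [hchar]
  have hst : (s : ℤ) - t ≠ 0 := fun h => hdvd (by simp [h])
  have hk : (k : ℤ) ≠ 0 :=
    Nat.cast_ne_zero.mpr (ne_zero_of_dvd_ne_zero (hord ▸ (orderOf_pos γ).ne') hkdvd)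
  have hval := padicValInt_two_add_one_eq_of_orderOf_zpow_eq_two horder
  rw [padicValInt.mul hst hk, padicValInt.of_nat, hord] at hval
  unfold padicValInt at hval
  omega

/-- Lemma on the evaluation points: if `(q-1)/k ∤ s - t` and
`v₂(s-t) ≠ v₂(q-1) - v₂(k) - 1`, then the `2k` elements
`γ^s·α_1, …, γ^s·α_k, γ^t·α_1, …, γ^t·α_k` are pairwise distinct and
`γ^{sk} + γ^{tk} ≠ 0`. -/
theorem stmt5 {F : Type} [Field F] [Fintype F]
    (p m : ℕ) (hp : p.Prime) (hodd : Odd p) (hm : 0 < m)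
    (hcard : Fintype.card F = p ^ m)
    (γ : Fˣ) (hγ : ∀ x : Fˣ, x ∈ Subgroup.zpowers γ)
    (k : ℕ) (hk2 : 2 ≤ k) (hkdvd : k ∣ Fintype.card F - 1)
    (α : Fin k → F)
    (hα : ∀ i : Fin k, α i = (γ : F) ^ ((Fintype.card F - 1) / k * ((i : ℕ) + 1)))
    (s t : ℕ) (hs1 : 1 ≤ s) (hsq : s ≤ Fintype.card F - 1)
    (ht1 : 1 ≤ t) (htq : t ≤ Fintype.card F - 1) (hst : s ≠ t)
    (hdvd : ¬ ((((Fintype.card F - 1) / k : ℕ) : ℤ) ∣ ((s : ℤ) - (t : ℤ))))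
    (hv2 : (padicValNat 2 ((s : ℤ) - (t : ℤ)).natAbs : ℤ) ≠
      (padicValNat 2 (Fintype.card F - 1) : ℤ) - (padicValNat 2 k : ℤ) - 1) :
    Function.Injective (Sum.elim (fun i : Fin k => (γ : F) ^ s * α i)
        (fun i : Fin k => (γ : F) ^ t * α i)) ∧
      (γ : F) ^ (s * k) + (γ : F) ^ (t * k) ≠ 0 :=
  stmt5_general p m hodd hcard γ hγ k hkdvd α hα s t hdvd hv2
end

section
/- For every integer t, each row of the matrix M_{k,t} contains exactly one nonzero entry, and each column of M_{k,t} contains exactly one nonzero entry. -/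
/-!
The `α i` are the powers `ζ ^ (i + 1)` of the primitive `k`-th root of unity
`ζ = γ ^ ((q² - 1) / k)`, so with `n = r + s q` the `(r, s)` entry is
`c ^ n * ∑ i, ζ ^ ((i + 1) n)`, which is `k c ^ n ≠ 0` if `k ∣ n` and `0` otherwise; `k` is
nonzero in `F` because it divides `|F| - 1`. Since `q² ≡ 1 (mod k)`, `q` is invertible modulo `k`,
so for each `r` exactly one `s` (and for each `s` exactly one `r`) solves `r + s q ≡ 0 (mod k)`.
-/

open Finset

theorem sum_fin_pow_succ_eq_zero {R : Type*} [CommRing R] [IsDomain R] {ω : R} {k : ℕ}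
    (hωk : ω ^ k = 1) (hω : ω ≠ 1) : ∑ i : Fin k, ω ^ ((i : ℕ) + 1) = 0 := by
  have hgeom : ∑ i ∈ range k, ω ^ i = 0 :=
    (mul_eq_zero.mp (by rw [geom_sum_mul, hωk, sub_self])).resolve_right (sub_ne_zero.mpr hω)
  simp_rw [Fin.sum_univ_eq_sum_range (fun i => ω ^ (i + 1)), pow_succ', ← mul_sum, hgeom,
    mul_zero]

namespace IsPrimitiveRoot

variable {R : Type*} [CommRing R] [IsDomain R] {ζ : R} {k : ℕ}

theorem sum_fin_pow_succ_pow (hζ : IsPrimitiveRoot ζ k) (n : ℕ) :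
    ∑ i : Fin k, (ζ ^ ((i : ℕ) + 1)) ^ n = if k ∣ n then (k : R) else 0 := by
  simp_rw [← pow_mul, mul_comm _ n, pow_mul]
  split_ifs with hn
  · simp [(hζ.pow_eq_one_iff_dvd n).mpr hn]
  · exact sum_fin_pow_succ_eq_zero (by rw [← pow_mul, mul_comm, pow_mul, hζ.pow_eq_one, one_pow])
      (mt (hζ.pow_eq_one_iff_dvd n).mp hn)

theorem sum_fin_mul_pow_succ_pow_ne_zero_iff (hζ : IsPrimitiveRoot ζ k) {c : R} (hc : c ≠ 0)
    (hk : (k : R) ≠ 0) (n : ℕ) :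
    ∑ i : Fin k, (c * ζ ^ ((i : ℕ) + 1)) ^ n ≠ 0 ↔ k ∣ n := by
  simp_rw [mul_pow, ← mul_sum, hζ.sum_fin_pow_succ_pow]
  split_ifs with hn <;> simp [hn, hc, hk]

end IsPrimitiveRoot

theorem IsPrimitiveRoot.pow_card_div_of_forall_mem_zpowers {G : Type*} [CommGroup G] [Finite G]
    {γ : G} (hγ : ∀ x : G, x ∈ Subgroup.zpowers γ) {k : ℕ} (hk : k ∣ Nat.card G) :
    IsPrimitiveRoot (γ ^ (Nat.card G / k)) k := by
  have hγ' : IsPrimitiveRoot γ (Nat.card G) :=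
    orderOf_eq_card_of_forall_mem_zpowers hγ ▸ IsPrimitiveRoot.orderOf γ
  exact hγ'.pow Nat.card_pos (Nat.div_mul_cancel hk).symm

theorem FiniteField.natCast_ne_zero_of_dvd_card_sub_one {F : Type*} [Field F] [Fintype F]
    {k : ℕ} (hk : k ∣ Fintype.card F - 1) : (k : F) ≠ 0 := by
  have hcard : ((Fintype.card F - 1 : ℕ) : F) = -1 := by
    rw [Nat.cast_sub Fintype.card_pos, FiniteField.cast_card_eq_zero, Nat.cast_one, zero_sub]
  obtain ⟨m, hm⟩ := hk
  intro h
  rw [hm, Nat.cast_mul, h, zero_mul] at hcard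
  exact neg_ne_zero.mpr one_ne_zero hcard.symm

namespace ZMod

theorem bijective_natCast_comp_finVal (k : ℕ) [NeZero k] :
    Function.Bijective (fun s : Fin k => ((s : ℕ) : ZMod k)) := by
  refine ⟨fun a b h => Fin.ext ?_, fun z => ⟨⟨z.val, z.val_lt⟩, natCast_zmod_val z⟩⟩
  rw [← val_cast_of_lt a.isLt, ← val_cast_of_lt b.isLt]
  exact congrArg val h

theorem isUnit_natCast_of_dvd_pow_sub_one {k q n : ℕ} (hq : q ≠ 0) (hn : n ≠ 0)
    (h : k ∣ q ^ n - 1) : IsUnit (q : ZMod k) := by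
  have hpow := (natCast_eq_zero_iff _ _).mpr h
  rw [Nat.cast_sub (Nat.one_le_pow n q (Nat.pos_of_ne_zero hq)), Nat.cast_pow, Nat.cast_one,
    sub_eq_zero] at hpow
  exact IsUnit.of_pow_eq_one hpow hn

variable {k : ℕ} [NeZero k] {q : ℕ}

theorem existsUnique_dvd_add_mul_left (s : ℕ) : ∃! r : Fin k, k ∣ r + s * q := by
  simp_rw [← natCast_eq_zero_iff, Nat.cast_add, add_eq_zero_iff_eq_neg]
  exact (bijective_natCast_comp_finVal k).existsUnique _

theorem existsUnique_dvd_add_mul_right (hq : IsUnit (q : ZMod k)) (r : ℕ) :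
    ∃! s : Fin k, k ∣ r + s * q := by
  simp_rw [← natCast_eq_zero_iff, Nat.cast_add, Nat.cast_mul, add_eq_zero_iff_eq_neg']
  exact ((Units.mulRight_bijective hq.unit).comp (bijective_natCast_comp_finVal k)).existsUnique _

end ZMod

theorem stmt9_general {F : Type} [Field F] [Fintype F]
    (q : ℕ)
    (hcard : Fintype.card F = q ^ 2)
    (γ : Fˣ) (hγ : ∀ x : Fˣ, x ∈ Subgroup.zpowers γ)
    (k : ℕ) (hkdvd : k ∣ q ^ 2 - 1)
    (α : Fin k → F)
    (hα : ∀ i : Fin k, α i = (γ : F) ^ ((q ^ 2 - 1) / k * ((i : ℕ) + 1)))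
    (t : ℤ) (M : Matrix (Fin k) (Fin k) F)
    (hM : ∀ r s : Fin k,
      M r s = ∑ i : Fin k, (((γ ^ t : Fˣ) : F) * α i) ^ ((r : ℕ) + (s : ℕ) * q)) :
    (∀ r : Fin k, ∃! s : Fin k, M r s ≠ 0) ∧ (∀ s : Fin k, ∃! r : Fin k, M r s ≠ 0) := by
  have hunits : Nat.card Fˣ = q ^ 2 - 1 := by
    rw [Nat.card_units, Nat.card_eq_fintype_card, hcard]
  have hq : 1 < q ^ 2 := hcard ▸ Fintype.one_lt_card
  have : NeZero k := ⟨(Nat.pos_of_dvd_of_pos hkdvd (by omega)).ne'⟩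
  set ζ : Fˣ := γ ^ ((q ^ 2 - 1) / k)
  have hζ : IsPrimitiveRoot (ζ : F) k := by
    have := IsPrimitiveRoot.pow_card_div_of_forall_mem_zpowers hγ (hunits ▸ hkdvd)
    rw [hunits] at this
    exact IsPrimitiveRoot.coe_units_iff.mpr this
  have hαζ : ∀ i : Fin k, α i = (ζ : F) ^ ((i : ℕ) + 1) := by
    simp [hα, ζ, pow_mul]
  have hMne : ∀ r s : Fin k, M r s ≠ 0 ↔ k ∣ (r : ℕ) + (s : ℕ) * q := by
    intro r s
    simp_rw [hM, hαζ]
    exact hζ.sum_fin_mul_pow_succ_pow_ne_zero_iff (Units.ne_zero _)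
      (FiniteField.natCast_ne_zero_of_dvd_card_sub_one (hcard ▸ hkdvd)) _
  have hqk : IsUnit (q : ZMod k) :=
    ZMod.isUnit_natCast_of_dvd_pow_sub_one (by rintro rfl; simp at hq) two_ne_zero hkdvd
  simp_rw [hMne]
  exact ⟨fun r => ZMod.existsUnique_dvd_add_mul_right hqk r,
    fun s => ZMod.existsUnique_dvd_add_mul_left s⟩

/-- each row and each column of the matrix
`M_{k,t}(r,s) = Σ_i (γ^t·α_i)^{(r-1)+(s-1)q}` contains exactly one nonzero entry. -/
theorem stmt9 {F : Type} [Field F] [Fintype F]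
    (q p m : ℕ) (hp : p.Prime) (hodd : Odd p) (hm : 0 < m) (hq : q = p ^ m)
    (hcard : Fintype.card F = q ^ 2)
    (γ : Fˣ) (hγ : ∀ x : Fˣ, x ∈ Subgroup.zpowers γ)
    (k : ℕ) (hk2 : 2 ≤ k) (hkdvd : k ∣ q ^ 2 - 1)
    (α : Fin k → F)
    (hα : ∀ i : Fin k, α i = (γ : F) ^ ((q ^ 2 - 1) / k * ((i : ℕ) + 1)))
    (t : ℤ) (M : Matrix (Fin k) (Fin k) F)
    (hM : ∀ r s : Fin k,
      M r s = ∑ i : Fin k, (((γ ^ t : Fˣ) : F) * α i) ^ ((r : ℕ) + (s : ℕ) * q)) :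
    (∀ r : Fin k, ∃! s : Fin k, M r s ≠ 0) ∧ (∀ s : Fin k, ∃! r : Fin k, M r s ≠ 0) :=
  stmt9_general q hcard γ hγ k hkdvd α hα t M hM
end

section
/- Assume k ∣ q−1, let δ be an integer with 1 ≤ δ ≤ q²−1, and let β = (γ^δ·α_1, …, γ^δ·α_k) ∈ F_{q²}^k (so n = k). If 2ℓ < k, or if k = 2ℓ and (k : F_{q²})·γ^{δ(k−ℓ+ℓq)} + Σ_{i=1}^{ℓ} a_{1i}^{1+q} ≠ 0 in F_{q²}, then the GRL code GRL_k(β, A) is Hermitian LCD. -/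
open Matrix BigOperators Finset

/-- Hermitian dual (with respect to `x ↦ x ^ q`) of a code `C ⊆ F^ι`. -/
def dualH {F : Type} [Field F] (q : ℕ) {ι : Type} [Fintype ι] (C : Submodule F (ι → F)) :
    Submodule F (ι → F) where
  carrier := {x | ∀ y ∈ C, ∑ i, x i * y i ^ q = 0}
  add_mem' := by
    intro a b ha hb y hy
    have h : ∑ i, (a + b) i * y i ^ q = (∑ i, a i * y i ^ q) + ∑ i, b i * y i ^ q := by
      rw [← Finset.sum_add_distrib]
      exact Finset.sum_congr rfl fun i _ => add_mul _ _ _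
    rw [h, ha y hy, hb y hy, add_zero]
  zero_mem' := by intro y hy; simp
  smul_mem' := by
    intro c a ha y hy
    have h : ∑ i, (c • a) i * y i ^ q = c * ∑ i, a i * y i ^ q := by
      rw [Finset.mul_sum]
      exact Finset.sum_congr rfl fun i _ => by
        simp [Pi.smul_apply, smul_eq_mul, mul_assoc]
    rw [h, ha y hy, mul_zero]

private lemma dvd_small {k n : ℕ} (h : k ∣ n) (hn : n < 2 * k) :
    n = 0 ∨ n = k := by
  obtain ⟨c, rfl⟩ := h
  have h2 : k * c < k * 2 := by rw [Nat.mul_comm k 2]; exact hn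
  have h3 : c < 2 := Nat.lt_of_mul_lt_mul_left h2
  interval_cases c
  · simp
  · right; omega

/-- with `k ∣ q - 1` and `β = (γ^δ·α_1, …, γ^δ·α_k)`, if `2ℓ < k`, or `k = 2ℓ`
and `k·γ^{δ(k-ℓ+ℓq)} + Σ a_{1i}^{1+q} ≠ 0`, the GRL code is Hermitian LCD. -/
theorem stmt11 {F : Type} [Field F] [Fintype F]
    (q p m : ℕ) (hp : p.Prime) (hodd : Odd p) (hm : 0 < m) (hq : q = p ^ m)
    (hcard : Fintype.card F = q ^ 2)
    (γ : Fˣ) (hγ : ∀ x : Fˣ, x ∈ Subgroup.zpowers γ)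
    (k ℓ : ℕ) (hℓ2 : 2 ≤ ℓ) (hℓk : ℓ ≤ k) (hkdvd : k ∣ q ^ 2 - 1)
    (A : Matrix (Fin ℓ) (Fin ℓ) F) (hA : IsUnit A.det)
    (α : Fin k → F)
    (hα : ∀ i : Fin k, α i = (γ : F) ^ ((q ^ 2 - 1) / k * ((i : ℕ) + 1)))
    (hkq : k ∣ q - 1)
    (δ : ℕ) (hδ1 : 1 ≤ δ) (hδq : δ ≤ q ^ 2 - 1)
    (β : Fin k → F) (hβ : ∀ i, β i = (γ : F) ^ δ * α i)
    (hcase : 2 * ℓ < k ∨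
      (k = 2 * ℓ ∧ (k : F) * (γ : F) ^ (δ * (k - ℓ + ℓ * q)) +
        ∑ i : Fin ℓ, A ⟨0, by omega⟩ i ^ (1 + q) ≠ 0)) :
    GRLcode k ℓ hℓk β A ⊓ dualH q (GRLcode k ℓ hℓk β A) = ⊥ := by
  classical
  set G := GRLmatrix k ℓ hℓk β A with hG
  set M : Fin k → Fin k → F := fun r s => ∑ i, G r i * G s i ^ q with hMdef
  -- basic numeric facts
  have hp3 : 3 ≤ p := by
    have h2 := hp.two_le
    rcases Nat.lt_or_ge p 3 with h | h
    · interval_cases p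
      · exact absurd hodd (by norm_num)
    · exact h
  have hq3 : 3 ≤ q := by
    have : p ≤ p ^ m := Nat.le_self_pow (by omega) p
    omega
  have h2lk : 2 * ℓ ≤ k := by rcases hcase with h | ⟨h, _⟩ <;> omega
  have hk0 : 0 < k := by omega
  have hqq1 : 1 < q ^ 2 := by nlinarith
  have hqne : q ≠ 0 := by omega
  -- (k : F) ≠ 0
  have hq0 : (q : F) = 0 := by
    have h1 := FiniteField.cast_card_eq_zero F
    rw [hcard] at h1
    have h2 : ((q : F)) ^ 2 = 0 := by exact_mod_cast h1
    exact pow_eq_zero_iff (by norm_num) |>.mp h2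
  have hkF : (k : F) ≠ 0 := by
    intro h
    obtain ⟨u, hu⟩ := hkq
    have h1 : ((q - 1 : ℕ) : F) = 0 := by
      rw [hu]; push_cast; rw [h]; ring
    rw [Nat.cast_sub (by omega), hq0] at h1
    norm_num at h1
  -- order of γ
  have hγord : orderOf γ = q ^ 2 - 1 := by
    rw [orderOf_eq_card_of_forall_mem_zpowers hγ, Nat.card_eq_fintype_card,
      Fintype.card_units, hcard]
  have hγpow : (γ : F) ^ (q ^ 2 - 1) = 1 := by
    have h1 := pow_orderOf_eq_one γ
    rw [hγord] at h1
    rw [← Units.val_pow_eq_pow_val, h1, Units.val_one]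
  set d : ℕ := (q ^ 2 - 1) / k with hd
  have hdk : d * k = q ^ 2 - 1 := Nat.div_mul_cancel hkdvd
  have hωord : orderOf (γ ^ d : Fˣ) = k := by
    rw [orderOf_pow γ, hγord, Nat.gcd_eq_right (Nat.div_dvd_of_dvd hkdvd),
      Nat.div_div_self hkdvd (by omega)]
  have hωdvd : ∀ t : ℕ, ((γ : F) ^ d) ^ t = 1 ↔ k ∣ t := by
    intro t
    have h1 : ((γ ^ d) ^ t : Fˣ) = 1 ↔ k ∣ t := by
      rw [← hωord]; exact orderOf_dvd_iff_pow_eq_one.symm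
    rw [← h1, ← Units.val_eq_one]
    push_cast
    rfl
  have hωk : ((γ : F) ^ d) ^ k = 1 := (hωdvd k).mpr dvd_rfl
  -- character sum
  have charsum : ∀ t : ℕ,
      (∑ j : Fin k, (((γ : F) ^ d) ^ ((j : ℕ) + 1)) ^ t) = if k ∣ t then (k : F) else 0 := by
    intro t
    have hterm : ∀ j : Fin k, (((γ : F) ^ d) ^ ((j : ℕ) + 1)) ^ t
        = (((γ : F) ^ d) ^ t) ^ ((j : ℕ) + 1) := by
      intro j; exact pow_right_comm _ _ _
    set x : F := ((γ : F) ^ d) ^ t with hx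
    have hsum : (∑ j : Fin k, (((γ : F) ^ d) ^ ((j : ℕ) + 1)) ^ t)
        = ∑ j ∈ Finset.range k, x ^ (j + 1) := by
      rw [Finset.sum_congr rfl fun j _ => hterm j]
      exact Fin.sum_univ_eq_sum_range (fun j => x ^ (j + 1)) k
    rw [hsum]
    by_cases hkt : k ∣ t
    · have hx1 : x = 1 := (hωdvd t).mpr hkt
      rw [if_pos hkt, hx1]
      simp
    · have hx1 : x ≠ 1 := fun h => hkt ((hωdvd t).mp h)
      have hxk : x ^ k = 1 := by
        rw [hx, ← pow_mul, Nat.mul_comm, pow_mul, hωk, one_pow]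
      have hg : (∑ j ∈ Finset.range k, x ^ j) * (x - 1) = x ^ k - 1 := geom_sum_mul x k
      rw [hxk, sub_self] at hg
      have hz : (∑ j ∈ Finset.range k, x ^ j) = 0 := by
        rcases mul_eq_zero.mp hg with h | h
        · exact h
        · exact absurd (sub_eq_zero.mp h) hx1
      rw [if_neg hkt]
      calc (∑ j ∈ Finset.range k, x ^ (j + 1))
          = (∑ j ∈ Finset.range k, x ^ j) * x := by
            rw [Finset.sum_mul]
            exact Finset.sum_congr rfl fun j _ => pow_succ x j
        _ = 0 := by rw [hz, zero_mul]
  -- β in terms of γ^d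
  have hβ' : ∀ j : Fin k, β j = (γ : F) ^ δ * ((γ : F) ^ d) ^ ((j : ℕ) + 1) := by
    intro j
    rw [hβ, hα, pow_mul]
  -- divisibility transfer
  obtain ⟨u, hu⟩ := hkq
  have hqu : q = k * u + 1 := by omega
  have hdvd_iff : ∀ r s : Fin k, (k ∣ (r : ℕ) + (s : ℕ) * q) ↔ (k ∣ (r : ℕ) + (s : ℕ)) := by
    intro r s
    have h1 : (r : ℕ) + (s : ℕ) * q = k * ((s : ℕ) * u) + ((r : ℕ) + (s : ℕ)) := by
      rw [hqu]; ring
    rw [h1, Nat.dvd_add_right (dvd_mul_right k _)]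
  -- the Vandermonde part of M
  have hD : ∀ r s : Fin k,
      (∑ j : Fin k, β j ^ (r : ℕ) * (β j ^ (s : ℕ)) ^ q)
        = if k ∣ (r : ℕ) + (s : ℕ) then
            (k : F) * (γ : F) ^ (δ * ((r : ℕ) + (s : ℕ) * q)) else 0 := by
    intro r s
    have h1 : ∀ j : Fin k, β j ^ (r : ℕ) * (β j ^ (s : ℕ)) ^ q
        = (γ : F) ^ (δ * ((r : ℕ) + (s : ℕ) * q))
          * (((γ : F) ^ d) ^ ((j : ℕ) + 1)) ^ ((r : ℕ) + (s : ℕ) * q) := by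
      intro j
      rw [← pow_mul, ← pow_add, hβ' j, mul_pow, ← pow_mul]
    rw [Finset.sum_congr rfl fun j _ => h1 j, ← Finset.mul_sum, charsum]
    by_cases hrs : k ∣ (r : ℕ) + (s : ℕ)
    · rw [if_pos ((hdvd_iff r s).mpr hrs), if_pos hrs, mul_comm]
    · rw [if_neg (fun h => hrs ((hdvd_iff r s).mp h)), if_neg hrs, mul_zero]
  -- splitting M
  have hsplit : ∀ r s : Fin k, M r s =
      (∑ j : Fin k, β j ^ (r : ℕ) * (β j ^ (s : ℕ)) ^ q) +
      ∑ j' : Fin ℓ, G r (Sum.inr j') * (G s (Sum.inr j')) ^ q := by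
    intro r s
    show (∑ i : Fin k ⊕ Fin ℓ, G r i * G s i ^ q) = _
    rw [Fintype.sum_sum_type]
    rfl
  have hGzero : ∀ (r : Fin k) (j' : Fin ℓ), (r : ℕ) < k - ℓ → G r (Sum.inr j') = 0 := by
    intro r j' h
    simp only [hG, GRLmatrix, Sum.elim_inr]
    rw [dif_pos h]
  have hGA : ∀ (r : Fin k) (j' : Fin ℓ), ¬ ((r : ℕ) < k - ℓ) → ∀ i : Fin ℓ,
      (i : ℕ) = (r : ℕ) - (k - ℓ) → G r (Sum.inr j') = A i j' := by
    intro r j' h i hi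
    simp only [hG, GRLmatrix, Sum.elim_inr]
    rw [dif_neg h]
    congr 1
    exact Fin.ext hi.symm
  -- column computation
  have colsum : ∀ (c : Fin k → F), (∀ s : Fin k, ∑ r : Fin k, c r * M r s = 0) →
      ∀ (s r₀ : Fin k), k ∣ (r₀ : ℕ) + (s : ℕ) →
      (∀ r : Fin k, r ≠ r₀ → k - ℓ ≤ (r : ℕ) → k - ℓ ≤ (s : ℕ) → c r = 0) →
      c r₀ * M r₀ s = 0 := by
    intro c hc s r₀ hdvd0 hcz
    have hcs := hc s
    rw [Fintype.sum_eq_single r₀ ?_] at hcs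
    · exact hcs
    · intro r hr
      by_cases hrs : k - ℓ ≤ (r : ℕ) ∧ k - ℓ ≤ (s : ℕ)
      · rw [hcz r hr hrs.1 hrs.2, zero_mul]
      · have hM0 : M r s = 0 := by
          rw [hsplit, hD]
          have hnd : ¬ (k ∣ (r : ℕ) + (s : ℕ)) := by
            intro hdd
            have h1 := dvd_small hdd (by omega)
            have h2 := dvd_small hdvd0 (by omega)
            exact hr (Fin.ext (by omega))
          rw [if_neg hnd, zero_add]
          apply Finset.sum_eq_zero
          intro j' _
          push_neg at hrs
          by_cases h1 : (r : ℕ) < k - ℓ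
          · rw [hGzero r j' h1, zero_mul]
          · have h2 : (s : ℕ) < k - ℓ := by
              rcases Nat.lt_or_ge (s : ℕ) (k - ℓ) with h | h
              · exact h
              · omega
            rw [hGzero s j' h2, zero_pow (by omega : q ≠ 0), mul_zero]
        rw [hM0, mul_zero]
  have hγne : (γ : F) ≠ 0 := Units.ne_zero γ
  have hDne : ∀ e : ℕ, (k : F) * (γ : F) ^ e ≠ 0 :=
    fun e => mul_ne_zero hkF (pow_ne_zero e hγne)
  -- kernel argument
  have hker : ∀ (c : Fin k → F), (∀ s : Fin k, ∑ r : Fin k, c r * M r s = 0) →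
      ∀ r, c r = 0 := by
    intro c hc
    have hkl1 : k - ℓ < k := by omega
    have hkl2 : ℓ < k := by omega
    have h0ℓ : 0 < ℓ := by omega
    -- rows with index ≥ ℓ + 1
    have step2 : ∀ r : Fin k, ℓ + 1 ≤ (r : ℕ) → c r = 0 := by
      intro r hr
      have hrk := r.isLt
      have hsl : k - (r : ℕ) < k := by omega
      have hdv : k ∣ (r : ℕ) + ((⟨k - (r : ℕ), hsl⟩ : Fin k) : ℕ) :=
        ⟨1, by show (r : ℕ) + (k - (r : ℕ)) = k * 1; omega⟩
      have h1 := colsum c hc ⟨k - (r : ℕ), hsl⟩ r hdv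
        (fun r' _ _ hs => absurd hs (by show ¬ (k - ℓ ≤ k - (r : ℕ)); omega))
      have hM1 : M r ⟨k - (r : ℕ), hsl⟩
          = (k : F) * (γ : F) ^ (δ * ((r : ℕ) + ((⟨k - (r : ℕ), hsl⟩ : Fin k) : ℕ) * q)) := by
        rw [hsplit, hD, if_pos hdv]
        have hE : ∑ j' : Fin ℓ, G r (Sum.inr j')
            * (G (⟨k - (r : ℕ), hsl⟩ : Fin k) (Sum.inr j')) ^ q = 0 := by
          apply Finset.sum_eq_zero
          intro j' _
          rw [hGzero ⟨k - (r : ℕ), hsl⟩ j' (by show k - (r : ℕ) < k - ℓ; omega),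
            zero_pow (by omega : q ≠ 0), mul_zero]
        rw [hE, add_zero]
      rw [hM1] at h1
      rcases mul_eq_zero.mp h1 with h | h
      · exact h
      · exact absurd h (hDne _)
    -- row ℓ
    have step3 : ∀ r : Fin k, (r : ℕ) = ℓ → c r = 0 := by
      intro r hr
      have hrk := r.isLt
      have hside : ∀ r' : Fin k, r' ≠ r → k - ℓ ≤ (r' : ℕ) → c r' = 0 := by
        intro r' hne hge
        apply step2
        have : (r' : ℕ) ≠ ℓ := fun h => hne (Fin.ext (by omega))
        omega
      rcases hcase with hlt | ⟨hk2l, hne⟩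
      · -- 2ℓ < k : use column k - ℓ
        have hdv : k ∣ (r : ℕ) + ((⟨k - ℓ, hkl1⟩ : Fin k) : ℕ) :=
          ⟨1, by show (r : ℕ) + (k - ℓ) = k * 1; omega⟩
        have h1 := colsum c hc ⟨k - ℓ, hkl1⟩ r hdv
          (fun r' h1 h2 _ => hside r' h1 h2)
        have hM1 : M r ⟨k - ℓ, hkl1⟩
            = (k : F) * (γ : F) ^ (δ * ((r : ℕ) + ((⟨k - ℓ, hkl1⟩ : Fin k) : ℕ) * q)) := by
          rw [hsplit, hD, if_pos hdv]
          have hE : ∑ j' : Fin ℓ, G r (Sum.inr j')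
              * (G (⟨k - ℓ, hkl1⟩ : Fin k) (Sum.inr j')) ^ q = 0 := by
            apply Finset.sum_eq_zero
            intro j' _
            rw [hGzero r j' (by omega), zero_mul]
          rw [hE, add_zero]
        rw [hM1] at h1
        rcases mul_eq_zero.mp h1 with h | h
        · exact h
        · exact absurd h (hDne _)
      · -- k = 2ℓ : use column ℓ
        have hdv : k ∣ (r : ℕ) + ((⟨ℓ, hkl2⟩ : Fin k) : ℕ) :=
          ⟨1, by show (r : ℕ) + ℓ = k * 1; omega⟩
        have h1 := colsum c hc ⟨ℓ, hkl2⟩ r hdv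
          (fun r' h1 h2 _ => hside r' h1 h2)
        have hM1 : M r ⟨ℓ, hkl2⟩
            = (k : F) * (γ : F) ^ (δ * (k - ℓ + ℓ * q))
              + ∑ i : Fin ℓ, A ⟨0, by omega⟩ i ^ (1 + q) := by
          rw [hsplit, hD, if_pos hdv]
          congr 1
          · congr 1
            congr 1
            show δ * ((r : ℕ) + ℓ * q) = δ * (k - ℓ + ℓ * q)
            rw [show (r : ℕ) = k - ℓ by omega]
          · apply Finset.sum_congr rfl
            intro j' _
            rw [hGA r j' (by omega) ⟨0, h0ℓ⟩ (by show (0 : ℕ) = (r : ℕ) - (k - ℓ); omega),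
              hGA ⟨ℓ, hkl2⟩ j' (by show ¬ (ℓ < k - ℓ); omega) ⟨0, h0ℓ⟩
                (by show (0 : ℕ) = ℓ - (k - ℓ); omega),
              pow_add, pow_one]
        rw [hM1] at h1
        rcases mul_eq_zero.mp h1 with h | h
        · exact h
        · exact absurd h hne
    -- row 0
    have step1 : ∀ r : Fin k, (r : ℕ) = 0 → c r = 0 := by
      intro r hr
      have hdv : k ∣ (r : ℕ) + (r : ℕ) := ⟨0, by omega⟩
      have h1 := colsum c hc r r hdv
        (fun r' hne hge hge2 => absurd hge2 (by omega))
      have hM1 : M r r = (k : F) * (γ : F) ^ (δ * ((r : ℕ) + (r : ℕ) * q)) := by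
        rw [hsplit, hD, if_pos hdv]
        have hE : ∑ j' : Fin ℓ, G r (Sum.inr j') * (G r (Sum.inr j')) ^ q = 0 := by
          apply Finset.sum_eq_zero
          intro j' _
          rw [hGzero r j' (by omega), zero_mul]
        rw [hE, add_zero]
      rw [hM1] at h1
      rcases mul_eq_zero.mp h1 with h | h
      · exact h
      · exact absurd h (hDne _)
    -- rows 1 .. ℓ - 1
    have step4 : ∀ r : Fin k, 1 ≤ (r : ℕ) → (r : ℕ) < ℓ → c r = 0 := by
      intro r hr1 hr2
      have hrk := r.isLt
      have hsl : k - (r : ℕ) < k := by omega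
      have hdv : k ∣ (r : ℕ) + ((⟨k - (r : ℕ), hsl⟩ : Fin k) : ℕ) :=
        ⟨1, by show (r : ℕ) + (k - (r : ℕ)) = k * 1; omega⟩
      have h1 := colsum c hc ⟨k - (r : ℕ), hsl⟩ r hdv
        (fun r' hne hge _ => by
          rcases Nat.lt_or_ge (r' : ℕ) (ℓ + 1) with h | h
          · exact step3 r' (by omega)
          · exact step2 r' h)
      have hM1 : M r ⟨k - (r : ℕ), hsl⟩
          = (k : F) * (γ : F) ^ (δ * ((r : ℕ) + ((⟨k - (r : ℕ), hsl⟩ : Fin k) : ℕ) * q)) := by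
        rw [hsplit, hD, if_pos hdv]
        have hE : ∑ j' : Fin ℓ, G r (Sum.inr j')
            * (G (⟨k - (r : ℕ), hsl⟩ : Fin k) (Sum.inr j')) ^ q = 0 := by
          apply Finset.sum_eq_zero
          intro j' _
          rw [hGzero r j' (by omega), zero_mul]
        rw [hE, add_zero]
      rw [hM1] at h1
      rcases mul_eq_zero.mp h1 with h | h
      · exact h
      · exact absurd h (hDne _)
    intro r
    rcases Nat.lt_or_ge (r : ℕ) 1 with h | h
    · exact step1 r (by omega)
    · rcases Nat.lt_or_ge (r : ℕ) ℓ with h2 | h2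
      · exact step4 r h h2
      · rcases Nat.lt_or_ge (r : ℕ) (ℓ + 1) with h3 | h3
        · exact step3 r (by omega)
        · exact step2 r h3
  -- conclude
  rw [eq_bot_iff]
  intro x hx
  obtain ⟨hx1, hx2⟩ := Submodule.mem_inf.mp hx
  obtain ⟨c, hcx⟩ := (Submodule.mem_span_range_iff_exists_fun F).mp hx1
  have hxi : ∀ i, x i = ∑ r : Fin k, c r * G r i := by
    intro i
    rw [← hcx]
    simp [Finset.sum_apply]
    rfl
  have hc : ∀ s : Fin k, ∑ r : Fin k, c r * M r s = 0 := by
    intro s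
    have hy : G s ∈ GRLcode k ℓ hℓk β A := Submodule.subset_span ⟨s, rfl⟩
    have h2 : ∑ i, x i * (G s i) ^ q = 0 := hx2 (G s) hy
    calc ∑ r : Fin k, c r * M r s
        = ∑ r : Fin k, ∑ i, c r * G r i * G s i ^ q := by
          apply Finset.sum_congr rfl
          intro r _
          rw [hMdef]
          rw [Finset.mul_sum]
          exact Finset.sum_congr rfl fun i _ => by ring
      _ = ∑ i, ∑ r : Fin k, c r * G r i * G s i ^ q := Finset.sum_comm
      _ = ∑ i, x i * G s i ^ q := by
          apply Finset.sum_congr rfl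
          intro i _
          rw [hxi i, Finset.sum_mul]
      _ = 0 := h2
  have hc0 := hker c hc
  have hx0 : x = 0 := by
    rw [← hcx]
    apply Finset.sum_eq_zero
    intro r _
    rw [hc0 r, zero_smul]
  rw [Submodule.mem_bot]
  exact hx0
end

section
/- Assume k ∣ q+1, let δ be an integer with 1 ≤ δ ≤ q²−1, and let β = (γ^δ·α_1, …, γ^δ·α_k) ∈ F_{q²}^k (so n = k). Then the Hermitian hull of GRL_k(β, A) has F_{q²}-dimension at most ℓ. -/
open Matrix BigOperators Finset

lemma keySum {F : Type} [Field F] (u : Fˣ) (k t : ℕ) (hk0 : 0 < k) (hord : orderOf u = k) :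
    ∑ j : Fin k, ((u : F)) ^ (((j : ℕ) + 1) * t) = if k ∣ t then (k : F) else 0 := by
  set v : F := (u : F) ^ t with hv
  have hvu : v = ((u ^ t : Fˣ) : F) := by simp [hv]
  have hvk : v ^ k = 1 := by
    rw [hvu, ← Units.val_pow_eq_pow_val, ← pow_mul, mul_comm, pow_mul, ← hord,
      pow_orderOf_eq_one, one_pow, Units.val_one]
  have hsum : ∑ j : Fin k, ((u : F)) ^ (((j : ℕ) + 1) * t) = ∑ j ∈ range k, v ^ (j + 1) :=
    calc ∑ j : Fin k, ((u : F)) ^ (((j : ℕ) + 1) * t) = ∑ j : Fin k, v ^ ((j : ℕ) + 1) :=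
          Finset.sum_congr rfl fun j _ => by rw [hv, ← pow_mul, mul_comm t]
      _ = ∑ j ∈ range k, v ^ (j + 1) := Fin.sum_univ_eq_sum_range (fun j => v ^ (j + 1)) k
  rw [hsum]
  by_cases h : k ∣ t
  · have hv1 : v = 1 := by
      rw [hvu]
      have : u ^ t = 1 := orderOf_dvd_iff_pow_eq_one.mp (hord ▸ h)
      rw [this, Units.val_one]
    rw [if_pos h]
    simp [hv1]
  · have hv1 : v ≠ 1 := by
      intro hh
      apply h
      rw [← hord, orderOf_dvd_iff_pow_eq_one]
      ext
      rw [Units.val_pow_eq_pow_val, ← hv, hh, Units.val_one]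
    rw [if_neg h]
    have hgeom : (∑ j ∈ range k, v ^ (j+1)) * (v - 1) = 0 := by
      have : ∑ j ∈ range k, v ^ (j+1) = v * ∑ j ∈ range k, v ^ j := by
        rw [Finset.mul_sum]
        exact Finset.sum_congr rfl fun j _ => by ring
      rw [this, mul_assoc, geom_sum_mul, hvk, sub_self, mul_zero]
    rcases mul_eq_zero.mp hgeom with h' | h'
    · exact h'
    · exact absurd (sub_eq_zero.mp h') hv1

/-- with `k ∣ q + 1` and `β = (γ^δ·α_1, …, γ^δ·α_k)`, the Hermitian hull of
the GRL code has dimension at most `ℓ`. -/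
theorem stmt12 {F : Type} [Field F] [Fintype F]
    (q p m : ℕ) (hp : p.Prime) (hodd : Odd p) (hm : 0 < m) (hq : q = p ^ m)
    (hcard : Fintype.card F = q ^ 2)
    (γ : Fˣ) (hγ : ∀ x : Fˣ, x ∈ Subgroup.zpowers γ)
    (k ℓ : ℕ) (hℓ2 : 2 ≤ ℓ) (hℓk : ℓ ≤ k) (hkdvd : k ∣ q ^ 2 - 1)
    (A : Matrix (Fin ℓ) (Fin ℓ) F) (hA : IsUnit A.det)
    (α : Fin k → F)
    (hα : ∀ i : Fin k, α i = (γ : F) ^ ((q ^ 2 - 1) / k * ((i : ℕ) + 1)))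
    (hkq : k ∣ q + 1)
    (δ : ℕ) (hδ1 : 1 ≤ δ) (hδq : δ ≤ q ^ 2 - 1)
    (β : Fin k → F) (hβ : ∀ i, β i = (γ : F) ^ δ * α i) :
    Module.finrank F ↥(GRLcode k ℓ hℓk β A ⊓ dualH q (GRLcode k ℓ hℓk β A)) ≤ ℓ := by
  classical
  have hk0 : 0 < k := by omega
  have hq2 : 2 ≤ q := by
    rw [hq]
    calc 2 ≤ p := hp.two_le
    _ ≤ p ^ m := Nat.le_self_pow (by omega) p
  have hq0 : q ≠ 0 := by omega
  have hq21 : 0 < q ^ 2 - 1 := by nlinarith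
  -- k is nonzero in F
  have hqF : (q : F) = 0 := by
    have h := FiniteField.cast_card_eq_zero F
    rw [hcard] at h
    push_cast at h
    exact pow_eq_zero_iff (by norm_num) |>.mp h
  have hkF : (k : F) ≠ 0 := by
    intro hk
    obtain ⟨a, ha⟩ := hkq
    have : ((q + 1 : ℕ) : F) = 0 := by
      rw [ha]; push_cast; rw [hk, zero_mul]
    rw [Nat.cast_add, Nat.cast_one, hqF, zero_add] at this
    exact one_ne_zero this
  -- order of γ and ζ
  have hcardu : Nat.card Fˣ = q ^ 2 - 1 := by
    rw [Nat.card_eq_fintype_card, Fintype.card_units, hcard]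
  have horder : orderOf γ = q ^ 2 - 1 := by
    rw [← hcardu]; exact orderOf_eq_card_of_forall_mem_zpowers hγ
  set e : ℕ := (q ^ 2 - 1) / k with he
  have hek : e * k = q ^ 2 - 1 := Nat.div_mul_cancel hkdvd
  have he0 : 0 < e := by
    rcases Nat.eq_zero_or_pos e with h | h
    · rw [h, zero_mul] at hek; omega
    · exact h
  have hedvd : e ∣ q ^ 2 - 1 := ⟨k, hek.symm⟩
  set ζ : Fˣ := γ ^ e with hζdef
  have hζord : orderOf ζ = k := by
    rw [hζdef, orderOf_pow, horder, Nat.gcd_eq_right hedvd, ← hek,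
      Nat.mul_div_cancel_left k he0]
  -- β powers
  have hβpow : ∀ (j : Fin k) (t : ℕ),
      (β j) ^ t = (γ : F) ^ (δ * t) * ((ζ : F)) ^ (((j : ℕ) + 1) * t) := by
    intro j t
    rw [hβ, hα, hζdef, Units.val_pow_eq_pow_val, mul_pow, ← pow_mul, ← pow_mul, ← pow_mul]
    congr 2
    ring
  -- divisibility criterion
  have hdvd_iff : ∀ r s : Fin k, (k ∣ (r : ℕ) + (s : ℕ) * q) ↔ r = s := by
    intro r s
    obtain ⟨a, ha⟩ := hkq
    constructor
    · intro h
      have h2 : (k : ℤ) ∣ ((r : ℕ) : ℤ) + ((s : ℕ) : ℤ) * (q : ℤ) := by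
        exact_mod_cast Int.natCast_dvd_natCast.mpr h
      have h3 : (k : ℤ) ∣ ((s : ℕ) : ℤ) * ((q : ℤ) + 1) := by
        refine Dvd.dvd.mul_left ⟨(a : ℤ), ?_⟩ _
        exact_mod_cast ha
      have h4 : (k : ℤ) ∣ ((r : ℕ) : ℤ) - ((s : ℕ) : ℤ) := by
        have heq : ((r : ℕ) : ℤ) - ((s : ℕ) : ℤ) =
            (((r : ℕ) : ℤ) + ((s : ℕ) : ℤ) * (q : ℤ)) - ((s : ℕ) : ℤ) * ((q : ℤ) + 1) := by
          ring
        rw [heq]; exact dvd_sub h2 h3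
      have h5 : ((r : ℕ) : ℤ) - ((s : ℕ) : ℤ) = 0 := by
        refine Int.eq_zero_of_abs_lt_dvd h4 ?_
        have hr := r.isLt
        have hs := s.isLt
        rw [abs_lt]
        constructor <;> [skip; skip] <;> push_cast <;> omega
      have : (r : ℕ) = (s : ℕ) := by omega
      exact Fin.ext this
    · rintro rfl
      exact ⟨(r : ℕ) * a, by calc (r : ℕ) + (r : ℕ) * q = (r : ℕ) * (q + 1) := by ring
        _ = (r : ℕ) * (k * a) := by rw [ha]
        _ = k * ((r : ℕ) * a) := by ring⟩
  set Gm : Matrix (Fin k) (Fin k ⊕ Fin ℓ) F := GRLmatrix k ℓ hℓk β A with hGm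
  -- Gram entries against early rows
  have hGram : ∀ r s : Fin k, (s : ℕ) < k - ℓ →
      (∑ i, Gm r i * (Gm s i) ^ q) =
        if r = s then (γ : F) ^ (δ * ((r : ℕ) + (s : ℕ) * q)) * k else 0 := by
    intro r s hs
    rw [Fintype.sum_sum_type]
    have hright : (∑ j' : Fin ℓ, Gm r (Sum.inr j') * (Gm s (Sum.inr j')) ^ q) = 0 := by
      refine Finset.sum_eq_zero fun j' _ => ?_
      have : Gm s (Sum.inr j') = 0 := by
        simp only [hGm, GRLmatrix, Sum.elim_inr]
        rw [dif_pos hs]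
      rw [this, zero_pow hq0, mul_zero]
    have hleft : (∑ j : Fin k, Gm r (Sum.inl j) * (Gm s (Sum.inl j)) ^ q) =
        (γ : F) ^ (δ * ((r : ℕ) + (s : ℕ) * q)) *
          ∑ j : Fin k, ((ζ : F)) ^ (((j : ℕ) + 1) * ((r : ℕ) + (s : ℕ) * q)) := by
      rw [Finset.mul_sum]
      refine Finset.sum_congr rfl fun j _ => ?_
      simp only [hGm, GRLmatrix, Sum.elim_inl]
      rw [← pow_mul, ← pow_add, hβpow]
    rw [hright, add_zero, hleft, keySum ζ k _ hk0 hζord]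
    by_cases hrs : r = s
    · rw [if_pos ((hdvd_iff r s).mpr hrs), if_pos hrs]
    · rw [if_neg (fun h => hrs ((hdvd_iff r s).mp h)), if_neg hrs, mul_zero]
  -- the span of the last ℓ rows
  set v : Fin ℓ → (Fin k ⊕ Fin ℓ → F) := fun j => Gm ⟨k - ℓ + (j : ℕ), by omega⟩ with hvdef
  have hsub : GRLcode k ℓ hℓk β A ⊓ dualH q (GRLcode k ℓ hℓk β A) ≤
      Submodule.span F (Set.range v) := by
    rintro x ⟨hx1, hx2⟩
    obtain ⟨c, hc⟩ := Submodule.mem_span_range_iff_exists_fun F |>.mp hx1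
    -- coefficients of early rows vanish
    have hczero : ∀ s : Fin k, (s : ℕ) < k - ℓ → c s = 0 := by
      intro s hs
      have hGs : Gm s ∈ GRLcode k ℓ hℓk β A :=
        Submodule.subset_span (Set.mem_range_self s)
      have h0 : (∑ i, x i * (Gm s i) ^ q) = 0 := hx2 (Gm s) hGs
      have hexp : (∑ i, x i * (Gm s i) ^ q) = c s * ((γ : F) ^ (δ * ((s : ℕ) + (s : ℕ) * q)) * k) := by
        calc (∑ i, x i * (Gm s i) ^ q)
            = ∑ i, (∑ r, c r * Gm r i) * (Gm s i) ^ q := by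
              refine Finset.sum_congr rfl fun i _ => ?_
              congr 1
              rw [← hc]
              simp [Finset.sum_apply]
              rfl
          _ = ∑ i, ∑ r, c r * Gm r i * (Gm s i) ^ q := by
              refine Finset.sum_congr rfl fun i _ => ?_
              rw [Finset.sum_mul]
          _ = ∑ r, ∑ i, c r * Gm r i * (Gm s i) ^ q := Finset.sum_comm
          _ = ∑ r, c r * ∑ i, Gm r i * (Gm s i) ^ q := by
              refine Finset.sum_congr rfl fun r _ => ?_
              rw [Finset.mul_sum]
              exact Finset.sum_congr rfl fun i _ => by ring
          _ = ∑ r, c r * (if r = s then (γ : F) ^ (δ * ((r : ℕ) + (s : ℕ) * q)) * k else 0) := by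
              refine Finset.sum_congr rfl fun r _ => by rw [hGram r s hs]
          _ = c s * ((γ : F) ^ (δ * ((s : ℕ) + (s : ℕ) * q)) * k) := by
              rw [Finset.sum_eq_single s]
              · rw [if_pos rfl]
              · intro r _ hr
                rw [if_neg hr, mul_zero]
              · intro h
                exact absurd (Finset.mem_univ s) h
      rw [hexp] at h0
      have hne : (γ : F) ^ (δ * ((s : ℕ) + (s : ℕ) * q)) * (k : F) ≠ 0 :=
        mul_ne_zero (pow_ne_zero _ (Units.ne_zero γ)) hkF
      exact (mul_eq_zero.mp h0).resolve_right hne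
    rw [← hc]
    refine Submodule.sum_mem _ fun r _ => ?_
    by_cases hr : (r : ℕ) < k - ℓ
    · rw [hczero r hr, zero_smul]
      exact Submodule.zero_mem _
    · have hrk := r.isLt
      refine Submodule.smul_mem _ _ (Submodule.subset_span ?_)
      refine ⟨⟨(r : ℕ) - (k - ℓ), by omega⟩, ?_⟩
      have hidx : (⟨k - ℓ + ((r : ℕ) - (k - ℓ)), by omega⟩ : Fin k) = r :=
        Fin.ext (by show k - ℓ + ((r : ℕ) - (k - ℓ)) = (r : ℕ); omega)
      calc v ⟨(r : ℕ) - (k - ℓ), by omega⟩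
          = Gm ⟨k - ℓ + ((r : ℕ) - (k - ℓ)), by omega⟩ := rfl
        _ = Gm r := by rw [hidx]
  calc Module.finrank F ↥(GRLcode k ℓ hℓk β A ⊓ dualH q (GRLcode k ℓ hℓk β A))
      ≤ Module.finrank F ↥(Submodule.span F (Set.range v)) := Submodule.finrank_mono hsub
    _ ≤ (Set.range v).toFinset.card := finrank_span_le_card (Set.range v)
    _ ≤ ℓ := by
        rw [Set.toFinset_range]
        calc (Finset.image v Finset.univ).card ≤ Finset.univ.card := Finset.card_image_le
          _ = ℓ := Finset.card_fin ℓ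
end
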